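/- arXiv:2305.19272 — 6 statements merged into one kernel-verified Lean document; each statement's English description precedes it below -/
import Mathlib

section
/- For every integer n ≥ 0, the Hurwitz class number satisfies H(5^4·n + 5^3) ≡ 0 (mod 3). -/
open Classical in
/-- The Hurwitz class number `H(N)`: the number of `SL₂(ℤ)`-classes of positive definite
integral binary quadratic forms of discriminant `-N` (counted via reduced representatives),
weighted by `2 / #Aut`, with `H(0) = -1/12`. -/
noncomputable def hurwitzClassNumber (N : ℕ) : ℚ :=
  if N = 0 then (-1 : ℚ) / 12
  else
    ∑ t ∈ (Finset.Icc 1 N ×ˢ Finset.Icc (-(N : ℤ)) (N : ℤ) ×ˢ Finset.Icc 1 N).filter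
        (fun t =>
          t.2.1 ^ 2 - 4 * (t.1 : ℤ) * (t.2.2 : ℤ) = -(N : ℤ) ∧
          |t.2.1| ≤ (t.1 : ℤ) ∧ t.1 ≤ t.2.2 ∧
          ((|t.2.1| = (t.1 : ℤ) ∨ t.1 = t.2.2) → 0 ≤ t.2.1)),
      (if t.2.1 = (t.1 : ℤ) ∧ t.1 = t.2.2 then (1 : ℚ) / 3
       else if t.2.1 = 0 ∧ t.1 = t.2.2 then (1 : ℚ) / 2
       else 1)

/-- Extension of the Hurwitz class number to integer arguments (zero for negative arguments). -/
noncomputable def hurwitzClassNumberZ (D : ℤ) : ℚ :=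
  if 0 ≤ D then hurwitzClassNumber D.toNat else 0

/-- `x ≡ 0 (mod ℓ)` for a rational `x`: `x` is `ℓ`-integral and `ℓ` divides `x`,
i.e. `x = ℓ * y` with `y` an `ℓ`-integral rational. -/
def RatModZero (ℓ : ℕ) (x : ℚ) : Prop :=
  ∃ y : ℚ, x = (ℓ : ℚ) * y ∧ ¬ (ℓ ∣ y.den)

/-!
For a prime `p ≥ 5` and `p ∤ m`, the positive definite forms of discriminant `-p³m` are, up to
`SL(2, ℤ)`, exactly the forms `g ∘ R` with `g` of discriminant `-pm` and `R` one of the `p + 1`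
coset representatives of integer matrices of determinant `p` (the Hecke correspondence `T_p`).
Existence: a form of discriminant `-p³m` takes a value divisible by `p²` at a primitive vector,
and then it factors through `diag(p, 1)`. Uniqueness: if `g ∘ R ~ g' ∘ R'` then
`g ∘ (R γ adj R') = p² g'`; since `p` exactly divides `disc g`, the matrix `R γ adj R'` is
divisible by `p`, so `g ~ g'`, and as `g` has no automorphisms besides `±1` also `R = R'`.
Hence there are `p + 1` times as many reduced forms of discriminant `-p³m` as of `-pm`. No form
of discriminant `-p³m` has extra automorphisms, so `H(p³m)` is that count; for `p = 5` and
`m = 5n + 1` it is divisible by `6`.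
-/

open Matrix
open scoped MatrixGroups

@[ext]
structure BinQuadForm where
  a : ℤ
  b : ℤ
  c : ℤ

namespace BinQuadForm

variable (f g : BinQuadForm)

def eval (x y : ℤ) : ℤ := f.a * x ^ 2 + f.b * x * y + f.c * y ^ 2

def disc : ℤ := f.b ^ 2 - 4 * f.a * f.c

def swap : BinQuadForm := ⟨f.c, f.b, f.a⟩

instance : SMul ℤ BinQuadForm := ⟨fun k f => ⟨k * f.a, k * f.b, k * f.c⟩⟩

@[simp] lemma smul_a (k : ℤ) : (k • f).a = k * f.a := rfl
@[simp] lemma smul_b (k : ℤ) : (k • f).b = k * f.b := rfl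
@[simp] lemma smul_c (k : ℤ) : (k • f).c = k * f.c := rfl

lemma eval_smul (k x y : ℤ) : (k • f).eval x y = k * f.eval x y := by
  simp only [eval, smul_a, smul_b, smul_c]; ring

lemma disc_smul (k : ℤ) : (k • f).disc = k ^ 2 * f.disc := by
  simp only [disc, smul_a, smul_b, smul_c]; ring

@[simp] lemma eval_swap (x y : ℤ) : f.swap.eval x y = f.eval y x := by
  unfold eval swap; ring

@[simp] lemma disc_swap : f.swap.disc = f.disc := by
  unfold disc swap; ring

lemma sq_b : f.b ^ 2 = f.disc + 4 * f.a * f.c := by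
  unfold disc; ring

lemma four_mul_a_mul_eval (x y : ℤ) :
    4 * f.a * f.eval x y = (2 * f.a * x + f.b * y) ^ 2 - f.disc * y ^ 2 := by
  unfold eval disc; ring

lemma prime_dvd_b {q : ℤ} (hq : Prime q) (ha : q ∣ f.a) (hd : q ∣ f.disc) : q ∣ f.b :=
  hq.dvd_of_dvd_pow (n := 2) (by rw [sq_b]; exact dvd_add hd ((ha.mul_left 4).mul_right _))

/-- The form `(x, y) ↦ f (M (x, y))`. -/
def comp (M : Matrix (Fin 2) (Fin 2) ℤ) : BinQuadForm where
  a := f.eval (M 0 0) (M 1 0)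
  b := 2 * f.a * M 0 0 * M 0 1 + f.b * (M 0 0 * M 1 1 + M 0 1 * M 1 0) + 2 * f.c * M 1 0 * M 1 1
  c := f.eval (M 0 1) (M 1 1)

lemma comp_mul (M N : Matrix (Fin 2) (Fin 2) ℤ) : f.comp (M * N) = (f.comp M).comp N := by
  ext <;> simp only [comp, eval, mul_apply, Fin.sum_univ_two] <;> ring

@[simp] lemma comp_one : f.comp 1 = f := by
  ext <;> simp [comp, eval]

lemma comp_neg (M : Matrix (Fin 2) (Fin 2) ℤ) : f.comp (-M) = f.comp M := by
  ext <;> simp only [comp, eval, neg_apply] <;> ring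

lemma comp_smul (k : ℤ) (M : Matrix (Fin 2) (Fin 2) ℤ) :
    f.comp (k • M) = k ^ 2 • f.comp M := by
  ext <;> simp only [comp, eval, Matrix.smul_apply, smul_eq_mul, smul_a, smul_b, smul_c] <;> ring

lemma disc_comp (M : Matrix (Fin 2) (Fin 2) ℤ) : (f.comp M).disc = M.det ^ 2 * f.disc := by
  simp only [disc, comp, eval, det_fin_two]; ring

lemma comp_S : f.comp ModularGroup.S = ⟨f.c, -f.b, f.a⟩ := by
  ext <;> simp [comp, eval, ModularGroup.coe_S]

lemma comp_T_zpow (t : ℤ) :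
    f.comp ↑(ModularGroup.T ^ t) = ⟨f.a, f.b + 2 * f.a * t, f.eval t 1⟩ := by
  ext <;> simp only [comp, eval, ModularGroup.coe_T_zpow, of_apply, cons_val', cons_val_zero,
    cons_val_one, cons_val_fin_one] <;> ring

def Equivalent : Prop := ∃ γ : SL(2, ℤ), f.comp γ = g

variable {f g}

lemma comp_inv_of_comp_eq {γ : SL(2, ℤ)} (h : f.comp γ = g) : g.comp ↑γ⁻¹ = f := by
  rw [← h, ← comp_mul, ← Matrix.SpecialLinearGroup.coe_mul, mul_inv_cancel,
    Matrix.SpecialLinearGroup.coe_one, comp_one]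

lemma Equivalent.symm : f.Equivalent g → g.Equivalent f
  | ⟨γ, h⟩ => ⟨γ⁻¹, comp_inv_of_comp_eq h⟩

lemma Equivalent.trans {h : BinQuadForm} : f.Equivalent g → g.Equivalent h → f.Equivalent h
  | ⟨γ, hγ⟩, ⟨δ, hδ⟩ => ⟨γ * δ, by
    rw [Matrix.SpecialLinearGroup.coe_mul, comp_mul, hγ, hδ]⟩

lemma Equivalent.disc_eq : f.Equivalent g → g.disc = f.disc
  | ⟨γ, h⟩ => by rw [← h, disc_comp, Matrix.SpecialLinearGroup.det_coe, one_pow, one_mul]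

lemma a_pos_of_eval_pos (hd : f.disc < 0) {x y : ℤ} (h : 0 < f.eval x y) : 0 < f.a := by
  have key := f.four_mul_a_mul_eval x y
  rcases lt_trichotomy f.a 0 with ha | ha | ha
  · nlinarith [sq_nonneg (2 * f.a * x + f.b * y), sq_nonneg y]
  · simp only [disc, ha] at hd; nlinarith [sq_nonneg f.b]
  · exact ha

lemma c_pos (hd : f.disc < 0) (ha : 0 < f.a) : 0 < f.c := by
  unfold disc at hd; nlinarith [sq_nonneg f.b]

variable (f) in
structure IsReduced : Prop where
  abs_b_le : |f.b| ≤ f.a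
  a_le_c : f.a ≤ f.c
  b_nonneg : |f.b| = f.a ∨ f.a = f.c → 0 ≤ f.b

namespace IsReduced

variable (hf : f.IsReduced)
include hf

lemma a_pos (hd : f.disc < 0) : 0 < f.a := by
  have := abs_le.mp hf.abs_b_le
  by_contra! ha
  have hb : f.b = 0 := by omega
  simp only [disc, hb] at hd; nlinarith [hf.a_le_c]

lemma c_le {N : ℕ} (hd : f.disc = -N) (hN : 0 < N) : f.c ≤ N := by
  have ha := hf.a_pos (by rw [hd]; exact neg_lt_zero.mpr (by exact_mod_cast hN))
  have hb := sq_le_sq' (abs_le.mp hf.abs_b_le).1 (abs_le.mp hf.abs_b_le).2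
  simp only [disc] at hd
  nlinarith [hf.a_le_c]

lemma neg_a_lt_b (ha : 0 < f.a) : -f.a < f.b := by
  refine (abs_le.mp hf.abs_b_le).1.lt_of_ne fun h => ?_
  have := hf.b_nonneg (Or.inl (by rw [← h, abs_neg, abs_of_pos ha]))
  linarith

lemma b_eq_a_of_a_le_abs (h : f.a ≤ |f.b|) : f.b = f.a := by
  have habs : |f.b| = f.a := le_antisymm hf.abs_b_le h
  rwa [abs_of_nonneg (hf.b_nonneg (Or.inl habs))] at habs

lemma a_sub_abs_b_add_c_le_eval {x y : ℤ} (hx : x ≠ 0) (hy : y ≠ 0) :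
    f.a - |f.b| + f.c ≤ f.eval x y := by
  have hab := hf.abs_b_le
  have hac := hf.a_le_c
  have ha : 0 ≤ f.a := (abs_nonneg _).trans hab
  have hbxy : -(|f.b| * (|x| * |y|)) ≤ f.b * x * y := by
    rw [mul_assoc, ← abs_mul, ← abs_mul]; exact neg_abs_le _
  have huv : 0 ≤ |x| * |y| - 1 := by nlinarith [Int.one_le_abs hx, Int.one_le_abs hy]
  have hv : 0 ≤ |y| ^ 2 - 1 := by nlinarith [Int.one_le_abs hy]
  -- with `u = |x|`, `v = |y|`: `a (u² + v² - 2) ≥ 2a (uv - 1) ≥ |b| (uv - 1)`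
  simp only [eval, ← sq_abs x, ← sq_abs y]
  nlinarith [mul_nonneg ha (sq_nonneg (|x| - |y|)), mul_nonneg (sub_nonneg.2 hab) huv,
    mul_nonneg ha huv, mul_nonneg (sub_nonneg.2 hac) hv]

lemma c_le_eval (x : ℤ) {y : ℤ} (hy : y ≠ 0) : f.c ≤ f.eval x y := by
  rcases eq_or_ne x 0 with rfl | hx
  · have : 1 ≤ y ^ 2 := by nlinarith [Int.one_le_abs hy, sq_abs y]
    simp only [eval]; nlinarith [abs_nonneg f.b, hf.abs_b_le, hf.a_le_c]
  · linarith [hf.a_sub_abs_b_add_c_le_eval hx hy, hf.abs_b_le]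

lemma a_le_eval {x y : ℤ} (h : x ≠ 0 ∨ y ≠ 0) : f.a ≤ f.eval x y := by
  rcases eq_or_ne y 0 with rfl | hy
  · have : 1 ≤ x ^ 2 := by nlinarith [Int.one_le_abs (h.resolve_right (not_not.2 rfl)), sq_abs x]
    simp only [eval]; nlinarith [abs_nonneg f.b, hf.abs_b_le]
  · exact hf.a_le_c.trans (hf.c_le_eval x hy)

lemma a_le_comp_a {M : Matrix (Fin 2) (Fin 2) ℤ} (hM : M.det ≠ 0) : f.a ≤ (f.comp M).a :=
  hf.a_le_eval (by by_contra! h; simp [det_fin_two, h.1, h.2] at hM)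

lemma a_eq_c_of_comp_a_le {M : Matrix (Fin 2) (Fin 2) ℤ} (hM : M 1 0 ≠ 0)
    (h : (f.comp M).a ≤ f.a) : f.a = f.c :=
  le_antisymm hf.a_le_c ((hf.c_le_eval _ hM).trans h)

end IsReduced

lemma isReduced_of_b_mem_Ioc (hb : f.b ∈ Set.Ioc (-f.a) f.a) (hac : f.a ≤ f.c)
    (hb0 : f.a = f.c → 0 ≤ f.b) : f.IsReduced where
  abs_b_le := abs_le.2 ⟨hb.1.le, hb.2⟩
  a_le_c := hac
  b_nonneg h := h.elim (fun h => by rcases abs_cases f.b with h' | h' <;> grind) hb0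

lemma _root_.Int.exists_add_two_mul_mul_mem_Ioc {a : ℤ} (ha : 0 < a) (b : ℤ) :
    ∃ t : ℤ, b + 2 * a * t ∈ Set.Ioc (-a) a := by
  refine ⟨(a - b) / (2 * a), ?_⟩
  have := Int.emod_add_mul_ediv (a - b) (2 * a)
  have := Int.emod_nonneg (a - b) (by omega : 2 * a ≠ 0)
  have := Int.emod_lt_of_pos (a - b) (by omega : 0 < 2 * a)
  constructor <;> linarith

theorem exists_equivalent_isReduced (hd : f.disc < 0) (ha : 0 < f.a) :
    ∃ g, f.Equivalent g ∧ g.IsReduced := by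
  induction hn : f.a.toNat using Nat.strong_induction_on generalizing f with
  | _ n ih =>
  obtain ⟨t, ht⟩ := Int.exists_add_two_mul_mul_mem_Ioc ha f.b
  have ⟨hb1, hb2⟩ := ht
  set b := f.b + 2 * f.a * t
  set c := f.eval t 1
  have hfg : f.Equivalent ⟨f.a, b, c⟩ := ⟨_, f.comp_T_zpow t⟩
  have hd' : (⟨f.a, b, c⟩ : BinQuadForm).disc < 0 := hfg.disc_eq ▸ hd
  have hc : 0 < c := c_pos hd' ha
  have hflip : (⟨f.a, b, c⟩ : BinQuadForm).Equivalent ⟨c, -b, f.a⟩ := ⟨_, comp_S _⟩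
  rcases lt_or_ge c f.a with hlt | hge
  · obtain ⟨g, hg, hgr⟩ := ih c.toNat (by omega) (f := ⟨c, -b, f.a⟩)
      (by simp only [disc] at hd' ⊢; linarith) hc rfl
    exact ⟨g, hfg.trans (hflip.trans hg), hgr⟩
  · by_cases hneg : f.a = c ∧ b < 0
    · refine ⟨_, hfg.trans hflip, isReduced_of_b_mem_Ioc ⟨?_, ?_⟩ ?_ fun _ => ?_⟩ <;>
        dsimp only <;> omega
    · exact ⟨_, hfg, isReduced_of_b_mem_Ioc ht hge (fun h => by dsimp only at h ⊢; omega)⟩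

lemma _root_.SL2_det_fin_two (γ : SL(2, ℤ)) : γ 0 0 * γ 1 1 - γ 0 1 * γ 1 0 = 1 := by
  rw [← det_fin_two]; exact γ.det_coe

section Uniqueness

variable {γ : SL(2, ℤ)}

lemma IsReduced.coe_eq_one_or_neg_one_of_lower_eq_zero (hf : f.IsReduced)
    (hg : (f.comp γ).IsReduced) (ha : 0 < f.a) (hr : γ 1 0 = 0) :
    (γ : Matrix (Fin 2) (Fin 2) ℤ) = 1 ∨ (γ : Matrix (Fin 2) (Fin 2) ℤ) = -1 := by
  have hps : γ 0 0 * γ 1 1 = 1 := by simpa [hr] using SL2_det_fin_two γ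
  have hp : γ 0 0 ^ 2 = 1 := by
    rcases Int.eq_one_or_neg_one_of_mul_eq_one' hps with ⟨h, -⟩ | ⟨h, -⟩ <;> simp [h]
  have hga : (f.comp γ).a = f.a := by simp only [comp, eval, hr, hp]; ring
  have hgb : (f.comp γ).b = f.b + 2 * f.a * (γ 0 0 * γ 0 1) := by
    simp only [comp, hr, hps]; ring
  have hk : γ 0 0 * γ 0 1 = 0 := by
    have h1 := abs_le.mp hf.abs_b_le
    have h2 := abs_le.mp hg.abs_b_le
    have h3 := hf.neg_a_lt_b ha
    have h4 := hg.neg_a_lt_b (hga ▸ ha)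
    rw [hga, hgb] at *
    rcases lt_trichotomy (γ 0 0 * γ 0 1) 0 with h | h | h
    · nlinarith
    · exact h
    · nlinarith
  have hq : γ 0 1 = 0 := (mul_eq_zero.mp hk).resolve_left fun h => by simp [h] at hps
  rw [eta_fin_two (γ : Matrix _ _ ℤ), hq, hr, one_fin_two]
  rcases Int.eq_one_or_neg_one_of_mul_eq_one' hps with ⟨hp, hs⟩ | ⟨hp, hs⟩
  · left; rw [hp, hs]
  · right; rw [hp, hs]; simp

theorem IsReduced.eq_of_equivalent (hf : f.IsReduced) (hg : g.IsReduced) (ha : 0 < f.a)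
    (h : f.Equivalent g) : f = g := by
  obtain ⟨γ, rfl⟩ := h
  have hinv := comp_inv_of_comp_eq (f := f) (γ := γ) rfl
  have hga : (f.comp γ).a = f.a := le_antisymm
    ((hg.a_le_comp_a (by rw [(γ⁻¹).det_coe]; exact one_ne_zero)).trans_eq (by rw [hinv]))
    (hf.a_le_comp_a (by simp))
  by_cases hr : γ 1 0 = 0
  · rcases hf.coe_eq_one_or_neg_one_of_lower_eq_zero hg ha hr with h | h <;> simp [h, comp_neg]
  · have hfc := hf.a_eq_c_of_comp_a_le hr hga.le
    have hgc := hg.a_eq_c_of_comp_a_le (M := ↑γ⁻¹)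
      (by simpa [Matrix.SpecialLinearGroup.SL2_inv_expl] using hr) (by rw [hinv, hga])
    have hdisc : (f.comp γ).disc = f.disc := Equivalent.disc_eq ⟨γ, rfl⟩
    have hb : (f.comp γ).b = f.b := by
      have h1 := hf.b_nonneg (Or.inr hfc)
      have h2 := hg.b_nonneg (Or.inr hgc)
      simp only [disc] at hdisc
      nlinarith
    ext <;> linarith

theorem IsReduced.coe_eq_one_or_neg_one_of_comp_eq_self (hf : f.IsReduced) (ha : 0 < f.a)
    (h3 : f.disc ≠ -3 * f.a ^ 2) (h4 : f.disc ≠ -4 * f.a ^ 2) (h : f.comp γ = f) :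
    (γ : Matrix (Fin 2) (Fin 2) ℤ) = 1 ∨ (γ : Matrix (Fin 2) (Fin 2) ℤ) = -1 := by
  by_cases hr : γ 1 0 = 0
  · exact hf.coe_eq_one_or_neg_one_of_lower_eq_zero (by rwa [h]) ha hr
  exfalso
  have hac := hf.a_eq_c_of_comp_a_le hr (by rw [h])
  suffices hb : f.b = f.a ∨ f.b = 0 by
    rcases hb with hb | hb
    · exact h3 (by simp only [disc, hb, ← hac]; ring)
    · exact h4 (by simp only [disc, hb, ← hac]; ring)
  have hev : f.eval (γ 0 0) (γ 1 0) = f.a := congrArg BinQuadForm.a h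
  by_cases hp : γ 0 0 = 0
  · have hqr : γ 0 1 * γ 1 0 = -1 := by linear_combination -SL2_det_fin_two γ + γ 1 1 * hp
    have hb : f.b = f.c * (γ 1 0 * γ 1 1) := by
      have := congrArg BinQuadForm.b h
      simp only [comp, hp] at this
      have : 2 * f.b = 2 * (f.c * (γ 1 0 * γ 1 1)) := by linear_combination -this + f.b * hqr
      omega
    by_cases hs : γ 1 1 = 0
    · right; simp [hb, hs]
    · left
      apply hf.b_eq_a_of_a_le_abs
      have hc : 0 ≤ f.c := (abs_nonneg _).trans (hf.abs_b_le.trans hf.a_le_c)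
      rw [hb, abs_mul, abs_of_nonneg hc, hac, abs_mul]
      exact le_mul_of_one_le_right hc (by nlinarith [Int.one_le_abs hr, Int.one_le_abs hs])
  · left
    apply hf.b_eq_a_of_a_le_abs
    linarith [hf.a_sub_abs_b_add_c_le_eval hp hr]

end Uniqueness

end BinQuadForm

section PrimeDivisibility

variable {p : ℕ} (hp : p.Prime)
include hp

lemma Int.dvd_of_natCast_prime_dvd_two_mul (hp2 : p ≠ 2) {a : ℤ} (h : (p : ℤ) ∣ 2 * a) :
    (p : ℤ) ∣ a := by
  refine ((Nat.prime_iff_prime_int.mp hp).dvd_or_dvd h).resolve_left fun h2 => hp2 ?_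
  exact (Nat.prime_dvd_prime_iff_eq hp Nat.prime_two).mp (by exact_mod_cast h2)

lemma Int.isCoprime_natCast_prime_pow (j : ℕ) {u : ℤ} (hu : ¬ (p : ℤ) ∣ u) :
    IsCoprime ((p : ℤ) ^ j) u :=
  ((Prime.coprime_iff_not_dvd (Nat.prime_iff_prime_int.mp hp)).mpr hu).pow_left

lemma Int.exists_natCast_prime_dvd_sub_mul {u : ℤ} (hu : ¬ (p : ℤ) ∣ u) (v : ℤ) :
    ∃ t : Fin p, (p : ℤ) ∣ v - t * u := by
  have := Fact.mk hp
  have hu' : (u : ZMod p) ≠ 0 := by rwa [Ne, ZMod.intCast_zmod_eq_zero_iff_dvd]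
  refine ⟨⟨((v : ZMod p) / u).val, ZMod.val_lt _⟩, ?_⟩
  rw [← ZMod.intCast_zmod_eq_zero_iff_dvd]
  push_cast
  rw [ZMod.natCast_zmod_val, div_mul_cancel₀ _ hu', sub_self]

lemma Int.natCast_prime_dvd_sub_mul_of_dvd_sub_mul {u u' v v' t : ℤ}
    (hdet : (p : ℤ) ∣ u * v' - u' * v) (hu : ¬ (p : ℤ) ∣ u) (h : (p : ℤ) ∣ v - t * u) :
    (p : ℤ) ∣ v' - t * u' := by
  refine ((Nat.prime_iff_prime_int.mp hp).dvd_or_dvd ?_).resolve_left hu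
  rw [show u * (v' - t * u') = (u * v' - u' * v) + u' * (v - t * u) by ring]
  exact dvd_add hdet (h.mul_left _)

end PrimeDivisibility

namespace BinQuadForm

variable {f : BinQuadForm} {p : ℕ} (hp : p.Prime)
include hp

lemma exists_pow_dvd_eval_one (hp2 : p ≠ 2) (ha : ¬ (p : ℤ) ∣ f.a) {j : ℕ} (hj : j ≤ 2)
    (hd : (p : ℤ) ^ j ∣ f.disc) : ∃ x, (p : ℤ) ^ j ∣ f.eval x 1 := by
  have h2a : ¬ (p : ℤ) ∣ 2 * f.a := fun h => ha (Int.dvd_of_natCast_prime_dvd_two_mul hp hp2 h)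
  have h4a : ¬ (p : ℤ) ∣ 4 * f.a := fun h =>
    h2a (Int.dvd_of_natCast_prime_dvd_two_mul hp hp2 (by rwa [← mul_assoc]))
  obtain ⟨t, ht⟩ := Int.exists_natCast_prime_dvd_sub_mul hp h2a (-f.b)
  refine ⟨t, (Int.isCoprime_natCast_prime_pow hp j h4a).dvd_of_dvd_mul_left ?_⟩
  have hsq : (p : ℤ) ^ j ∣ (2 * f.a * t + f.b * 1) ^ 2 := (pow_dvd_pow _ hj).trans
    (pow_dvd_pow_of_dvd (by simpa [neg_sub', mul_comm] using ht.neg_right) 2)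
  rw [four_mul_a_mul_eval]
  exact dvd_sub hsq (hd.mul_right _)

lemma dvd_and_dvd_of_sq_dvd_eval (hp2 : p ≠ 2) (hd : (p : ℤ) ∣ f.disc)
    (hd2 : ¬ (p : ℤ) ^ 2 ∣ f.disc) {x y : ℤ} (h : (p : ℤ) ^ 2 ∣ f.eval x y) :
    (p : ℤ) ∣ x ∧ (p : ℤ) ∣ y := by
  have hp' := Nat.prime_iff_prime_int.mp hp
  wlog ha : ¬ (p : ℤ) ∣ f.a generalizing f x y
  · have hc : ¬ (p : ℤ) ∣ f.c := by
      rintro ⟨c, hc⟩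
      obtain ⟨a, ha⟩ := not_not.mp ha
      obtain ⟨b, hb⟩ := f.prime_dvd_b hp' ⟨a, ha⟩ hd
      exact hd2 ⟨b ^ 2 - 4 * a * c, by unfold disc; rw [ha, hb, hc]; ring⟩
    exact (this (f := f.swap) (by simpa) (by simpa) (by simpa using h) hc).symm
  have hsq : (2 * f.a * x + f.b * y) ^ 2 = 4 * f.a * f.eval x y + f.disc * y ^ 2 := by
    linarith [f.four_mul_a_mul_eval x y]
  have hu : (p : ℤ) ∣ 2 * f.a * x + f.b * y := hp'.dvd_of_dvd_pow (n := 2) (by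
    rw [hsq]; exact dvd_add (((dvd_pow_self _ two_ne_zero).trans h).mul_left _) (hd.mul_right _))
  have hy : (p : ℤ) ∣ y := by
    by_contra hy
    refine hd2 (((Int.isCoprime_natCast_prime_pow hp 2 hy).pow_right (n := 2)).dvd_of_dvd_mul_right
      ?_)
    rw [show f.disc * y ^ 2 = (2 * f.a * x + f.b * y) ^ 2 - 4 * f.a * f.eval x y by rw [hsq]; ring]
    exact dvd_sub (pow_dvd_pow_of_dvd hu 2) (h.mul_left _)
  refine ⟨?_, hy⟩
  have h2ax : (p : ℤ) ∣ 2 * (f.a * x) := by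
    rw [show 2 * (f.a * x) = (2 * f.a * x + f.b * y) - f.b * y by ring]
    exact dvd_sub hu (hy.mul_left _)
  exact (hp'.dvd_or_dvd (Int.dvd_of_natCast_prime_dvd_two_mul hp hp2 h2ax)).resolve_left ha

lemma exists_isCoprime_sq_dvd_eval (hp2 : p ≠ 2) (hd : (p : ℤ) ^ 3 ∣ f.disc) :
    ∃ x y, IsCoprime x y ∧ (p : ℤ) ^ 2 ∣ f.eval x y := by
  have hp' := Nat.prime_iff_prime_int.mp hp
  have hd2 : (p : ℤ) ^ 2 ∣ f.disc := (pow_dvd_pow _ (by norm_num)).trans hd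
  by_cases ha : (p : ℤ) ∣ f.a
  swap
  · obtain ⟨x, hx⟩ := exists_pow_dvd_eval_one hp hp2 ha le_rfl hd2
    exact ⟨x, 1, isCoprime_one_right, hx⟩
  by_cases hc : (p : ℤ) ∣ f.c
  swap
  · obtain ⟨y, hy⟩ := exists_pow_dvd_eval_one hp hp2 (f := f.swap) hc le_rfl (by simpa)
    exact ⟨1, y, isCoprime_one_left, by simpa using hy⟩
  obtain ⟨b, hb⟩ := f.prime_dvd_b hp' ha ((dvd_pow_self _ two_ne_zero).trans hd2)
  obtain ⟨a, ha⟩ := ha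
  obtain ⟨c, hc⟩ := hc
  set g : BinQuadForm := ⟨a, b, c⟩
  have hfg : f = (p : ℤ) • g := by ext <;> simp [g, ha, hb, hc]
  have hgd : (p : ℤ) ∣ g.disc := by
    rw [hfg, disc_smul, pow_succ] at hd
    exact (mul_dvd_mul_iff_left (pow_ne_zero 2 hp'.ne_zero)).mp hd
  by_cases hga : (p : ℤ) ∣ g.a
  · exact ⟨1, 0, isCoprime_one_left, by simpa [eval, ha, sq] using mul_dvd_mul_left _ hga⟩
  · obtain ⟨x, hx⟩ :=
      exists_pow_dvd_eval_one hp hp2 hga (j := 1) (by norm_num) (by simpa using hgd)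
    exact ⟨x, 1, isCoprime_one_right, by
      rw [hfg, eval_smul, sq]; exact mul_dvd_mul_left _ (by simpa using hx)⟩

theorem exists_comp_eq_of_pow_three_dvd_disc (hp2 : p ≠ 2) (hd : (p : ℤ) ^ 3 ∣ f.disc) :
    ∃ (g : BinQuadForm) (M : Matrix (Fin 2) (Fin 2) ℤ), M.det = p ∧ g.comp M = f := by
  have hp' := Nat.prime_iff_prime_int.mp hp
  obtain ⟨x, y, hxy, hdvd⟩ := exists_isCoprime_sq_dvd_eval hp hp2 hd
  obtain ⟨γ, hx, hy⟩ := hxy.exists_SL2_col 0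
  set F := f.comp γ
  have hFd : (p : ℤ) ^ 2 ∣ F.disc :=
    (Equivalent.disc_eq ⟨γ, rfl⟩).symm ▸ (pow_dvd_pow _ (by norm_num)).trans hd
  obtain ⟨a, ha⟩ : (p : ℤ) ^ 2 ∣ F.a := by simpa [F, comp, hx, hy] using hdvd
  obtain ⟨b, hb⟩ := F.prime_dvd_b hp' ⟨p * a, by rw [ha]; ring⟩
    ((dvd_pow_self _ two_ne_zero).trans hFd)
  refine ⟨⟨a, b, F.c⟩, !![(p : ℤ), 0; 0, 1] * ((γ⁻¹ : SL(2, ℤ)) : Matrix _ _ ℤ),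
    by rw [det_mul, det_fin_two_of, γ⁻¹.det_coe]; ring, ?_⟩
  rw [comp_mul, show (⟨a, b, F.c⟩ : BinQuadForm).comp !![(p : ℤ), 0; 0, 1] = F by
    ext <;> simp only [comp, eval, ha, hb, of_apply, cons_val', cons_val_zero, cons_val_one,
      cons_val_fin_one] <;> ring]
  exact comp_inv_of_comp_eq rfl

end BinQuadForm

/-- Representatives of the `p + 1` cosets `M * SL(2, ℤ)` of the integer matrices `M` of
determinant `p`. -/
def heckeRep (p : ℕ) : Option (Fin p) → Matrix (Fin 2) (Fin 2) ℤ
  | none => !![(p : ℤ), 0; 0, 1]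
  | some t => !![1, 0; (t : ℤ), p]

lemma det_heckeRep (p : ℕ) (x : Option (Fin p)) : (heckeRep p x).det = p := by
  cases x <;> simp [heckeRep, det_fin_two_of]

section HeckeCosets

variable {p : ℕ} (hp : p.Prime)
include hp

lemma exists_eq_heckeRep_mul {M : Matrix (Fin 2) (Fin 2) ℤ} (hM : M.det = p) :
    ∃ (x : Option (Fin p)) (γ : SL(2, ℤ)), M = heckeRep p x * γ := by
  suffices ∃ x A, M = heckeRep p x * A by
    obtain ⟨x, A, rfl⟩ := this
    refine ⟨x, ⟨A, ?_⟩, rfl⟩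
    rw [det_mul, det_heckeRep] at hM
    exact (mul_eq_left₀ (by exact_mod_cast hp.ne_zero)).mp hM
  have hdet : (p : ℤ) ∣ M 0 0 * M 1 1 - M 0 1 * M 1 0 :=
    ⟨1, by rw [← det_fin_two, hM, mul_one]⟩
  by_cases h0 : (p : ℤ) ∣ M 0 0 ∧ (p : ℤ) ∣ M 0 1
  · obtain ⟨⟨u, hu⟩, ⟨v, hv⟩⟩ := h0
    exact ⟨none, !![u, v; M 1 0, M 1 1], by rw [eta_fin_two M]; simp [heckeRep, hu, hv]⟩
  have key : ∃ t : Fin p,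
      (p : ℤ) ∣ M 1 0 - t * M 0 0 ∧ (p : ℤ) ∣ M 1 1 - t * M 0 1 := by
    by_cases hu : (p : ℤ) ∣ M 0 0
    · have hv : ¬ (p : ℤ) ∣ M 0 1 := fun hv => h0 ⟨hu, hv⟩
      obtain ⟨t, ht⟩ := Int.exists_natCast_prime_dvd_sub_mul hp hv (M 1 1)
      refine ⟨t, Int.natCast_prime_dvd_sub_mul_of_dvd_sub_mul hp ?_ hv ht, ht⟩
      rw [show M 0 1 * M 1 0 - M 0 0 * M 1 1 = -(M 0 0 * M 1 1 - M 0 1 * M 1 0) by ring]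
      exact hdet.neg_right
    · obtain ⟨t, ht⟩ := Int.exists_natCast_prime_dvd_sub_mul hp hu (M 1 0)
      exact ⟨t, ht, Int.natCast_prime_dvd_sub_mul_of_dvd_sub_mul hp hdet hu ht⟩
  obtain ⟨t, ⟨k, hk⟩, ⟨l, hl⟩⟩ := key
  refine ⟨some t, !![M 0 0, M 0 1; k, l], ?_⟩
  ext i j
  fin_cases i <;> fin_cases j <;>
    simp only [heckeRep, mul_apply, Fin.sum_univ_two, of_apply, cons_val', cons_val_zero,
      cons_val_one, cons_val_fin_one, Fin.zero_eta, Fin.mk_one] <;> linarith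

lemma eq_of_heckeRep_mul_eq {x y : Option (Fin p)} {A : Matrix (Fin 2) (Fin 2) ℤ}
    (h : heckeRep p x * A = heckeRep p y) : x = y := by
  have e := fun i j => congrFun (congrFun h i) j
  have hp1 : (1 : ℤ) < p := by exact_mod_cast hp.one_lt
  rcases x with _ | t <;> rcases y with _ | u <;>
    simp only [heckeRep, mul_apply, Fin.sum_univ_two, of_apply, cons_val', cons_val_zero,
      cons_val_one, cons_val_fin_one, Fin.forall_fin_two, zero_mul, one_mul, add_zero, zero_add,
      mul_eq_zero, Int.natCast_eq_zero] at e
  · rfl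
  · have := Int.eq_one_of_mul_eq_one_right (Int.natCast_nonneg p) e.1.1
    omega
  · have := Int.eq_one_of_mul_eq_one_right (Int.natCast_nonneg p) (by simpa [e.1.2] using e.2.2)
    omega
  · obtain ⟨⟨h00, -⟩, h10, -⟩ := e
    rw [h00, mul_one] at h10
    have ht : (t : ℤ) < p := by exact_mod_cast t.isLt
    have hu : (u : ℤ) < p := by exact_mod_cast u.isLt
    have h10' : A 1 0 = 0 := by
      rcases lt_trichotomy (A 1 0) 0 with h | h | h
      · nlinarith
      · exact h
      · nlinarith
    rw [h10', mul_zero, add_zero] at h10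
    exact congrArg some (Fin.ext (by exact_mod_cast h10))

end HeckeCosets

lemma Int.mul_ne_mul_sq {q d m : ℤ} (hq : Prime q) (hd : ¬ q ∣ d) (hm : ¬ q ∣ m) (k : ℤ) :
    q * m ≠ d * k ^ 2 := by
  intro h
  obtain ⟨k, rfl⟩ := hq.dvd_of_dvd_pow ((hq.dvd_or_dvd ⟨m, h.symm⟩).resolve_left hd)
  exact hm ⟨d * k ^ 2, mul_left_cancel₀ hq.ne_zero (by rw [h]; ring)⟩

lemma Int.pow_three_mul_ne_mul_sq {q d m : ℤ} (hq : Prime q) (hd : ¬ q ∣ d) (hm : ¬ q ∣ m)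
    (k : ℤ) : q ^ 3 * m ≠ d * k ^ 2 := by
  intro h
  obtain ⟨k, rfl⟩ :=
    hq.dvd_of_dvd_pow ((hq.dvd_or_dvd ⟨q ^ 2 * m, by rw [← h]; ring⟩).resolve_left hd)
  exact Int.mul_ne_mul_sq hq hd hm k
    (mul_left_cancel₀ (pow_ne_zero 2 hq.ne_zero) (by linear_combination h))

namespace BinQuadForm

variable {p : ℕ} (hp : p.Prime)
include hp

lemma exists_eq_smul_of_comp_eq_sq_smul (hp2 : p ≠ 2) {g g' : BinQuadForm}
    (hd : (p : ℤ) ∣ g.disc) (hd2 : ¬ (p : ℤ) ^ 2 ∣ g.disc) {W : Matrix (Fin 2) (Fin 2) ℤ}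
    (hW : g.comp W = (p : ℤ) ^ 2 • g') : ∃ V, W = (p : ℤ) • V ∧ g.comp V = g' := by
  have hp0 : (p : ℤ) ^ 2 ≠ 0 := pow_ne_zero 2 (by exact_mod_cast hp.ne_zero)
  have h0 := dvd_and_dvd_of_sq_dvd_eval hp hp2 hd hd2 ⟨g'.a, congrArg BinQuadForm.a hW⟩
  have h1 := dvd_and_dvd_of_sq_dvd_eval hp hp2 hd hd2 ⟨g'.c, congrArg BinQuadForm.c hW⟩
  have hdvd (i j) : (p : ℤ) ∣ W i j := by
    fin_cases i <;> fin_cases j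
    exacts [h0.1, h1.1, h0.2, h1.2]
  refine ⟨Matrix.of fun i j => W i j / p, ?_, ?_⟩
  · ext i j; simp [Int.mul_ediv_cancel' (hdvd i j)]
  · have hWV : W = (p : ℤ) • Matrix.of fun i j => W i j / p := by
      ext i j; simp [Int.mul_ediv_cancel' (hdvd i j)]
    rw [hWV, comp_smul] at hW
    ext
    · exact mul_left_cancel₀ hp0 (congrArg BinQuadForm.a hW)
    · exact mul_left_cancel₀ hp0 (congrArg BinQuadForm.b hW)
    · exact mul_left_cancel₀ hp0 (congrArg BinQuadForm.c hW)

theorem eq_of_comp_heckeRep_equivalent (hp5 : 5 ≤ p) {m : ℤ} (hm : 0 < m)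
    (hpm : ¬ (p : ℤ) ∣ m) {g g' : BinQuadForm} (hgd : g.disc = -(p * m)) (hg : g.IsReduced)
    (hg' : g'.IsReduced)
    {x x' : Option (Fin p)} (h : (g.comp (heckeRep p x)).Equivalent (g'.comp (heckeRep p x'))) :
    x = x' ∧ g = g' := by
  have hp' := Nat.prime_iff_prime_int.mp hp
  have hp0 : (p : ℤ) ≠ 0 := hp'.ne_zero
  obtain ⟨γ, hγ⟩ := h
  set W := heckeRep p x * γ * adjugate (heckeRep p x')
  have hW : g.comp W = (p : ℤ) ^ 2 • g' := by
    rw [comp_mul, comp_mul, hγ, ← comp_mul, mul_adjugate, det_heckeRep, comp_smul, comp_one]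
  obtain ⟨V, hWV, hV⟩ := exists_eq_smul_of_comp_eq_sq_smul hp (by omega)
    ⟨-m, by rw [hgd]; ring⟩
    (by rw [hgd, dvd_neg, sq]; exact fun h => hpm ((mul_dvd_mul_iff_left hp0).mp h)) hW
  have hdetV : V.det = 1 := by
    have hdetW : W.det = (p : ℤ) ^ 2 := by
      simp only [W, det_mul, det_adjugate, det_heckeRep, γ.det_coe, Fintype.card_fin,
        Nat.add_one_sub_one]
      ring
    rw [hWV, det_smul, Fintype.card_fin] at hdetW
    exact (mul_eq_left₀ (pow_ne_zero 2 hp0)).mp hdetW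
  have ha : 0 < g.a := hg.a_pos (by rw [hgd]; nlinarith [hp.pos])
  obtain rfl : g = g' := hg.eq_of_equivalent hg' ha ⟨⟨V, hdetV⟩, hV⟩
  refine ⟨?_, rfl⟩
  have hq (d : ℤ) (hd : 0 < d) (hd4 : d ≤ 4) : g.disc ≠ -d * g.a ^ 2 := by
    rw [hgd, neg_mul, ne_eq, neg_inj]
    exact Int.mul_ne_mul_sq hp' (fun h => by have := Int.le_of_dvd hd h; omega) hpm g.a
  have hWR : W * heckeRep p x' = (p : ℤ) • (heckeRep p x * γ) := by
    rw [mul_assoc, adjugate_mul, det_heckeRep, Matrix.mul_smul, mul_one]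
  rcases hg.coe_eq_one_or_neg_one_of_comp_eq_self ha (hq 3 (by norm_num) (by norm_num))
    (hq 4 (by norm_num) le_rfl) (γ := ⟨V, hdetV⟩) hV with h1 | h1
  · rw [hWV, show V = 1 from h1, smul_mul_assoc, one_mul] at hWR
    exact eq_of_heckeRep_mul_eq hp (A := γ) (smul_right_injective _ hp0 hWR).symm
  · rw [hWV, show V = -1 from h1, smul_mul_assoc, neg_one_mul] at hWR
    exact eq_of_heckeRep_mul_eq hp (A := -γ)
      (by rw [mul_neg, ← smul_right_injective _ hp0 hWR, neg_neg])

theorem exists_comp_heckeRep_equivalent (hp2 : p ≠ 2) {F : BinQuadForm} {D : ℤ}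
    (hF : F.disc = (p : ℤ) ^ 2 * D) (hpD : (p : ℤ) ∣ D) (hD : D < 0) (hFa : 0 < F.a) :
    ∃ (x : Option (Fin p)) (g : BinQuadForm), g.IsReduced ∧ g.disc = D ∧
      (g.comp (heckeRep p x)).Equivalent F := by
  have hp0 : (p : ℤ) ≠ 0 := by exact_mod_cast hp.ne_zero
  obtain ⟨f, M, hM, rfl⟩ := exists_comp_eq_of_pow_three_dvd_disc hp hp2
    (by rw [hF, pow_succ]; exact mul_dvd_mul_left _ hpD)
  have hfd : f.disc = D := by
    rw [disc_comp, hM] at hF; exact mul_left_cancel₀ (pow_ne_zero 2 hp0) hF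
  obtain ⟨g, ⟨γ, rfl⟩, hg⟩ :=
    exists_equivalent_isReduced (hfd ▸ hD) (a_pos_of_eval_pos (hfd ▸ hD) hFa)
  obtain ⟨x, δ, hδ⟩ :=
    exists_eq_heckeRep_mul hp (M := ((γ⁻¹ : SL(2, ℤ)) : Matrix _ _ ℤ) * M)
      (by rw [det_mul, γ⁻¹.det_coe, one_mul, hM])
  refine ⟨x, _, hg, (Equivalent.disc_eq ⟨γ, rfl⟩).trans hfd, δ, ?_⟩
  rw [← comp_mul, ← hδ, comp_mul, comp_inv_of_comp_eq rfl]

end BinQuadForm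

abbrev ReducedForm (N : ℕ) : Type := {f : BinQuadForm // f.disc = -N ∧ f.IsReduced}

open BinQuadForm in
theorem card_reducedForm_prime_pow_three_mul {p m : ℕ} (hp : p.Prime) (hp5 : 5 ≤ p) (hm : 0 < m)
    (hpm : ¬ p ∣ m) :
    Nat.card (ReducedForm (p ^ 3 * m)) = (p + 1) * Nat.card (ReducedForm (p * m)) := by
  have hpm' : ¬ (p : ℤ) ∣ m := by exact_mod_cast hpm
  have hpos : (0 : ℤ) < p * m := by exact_mod_cast Nat.mul_pos hp.pos hm
  have key (z : Option (Fin p) × ReducedForm (p * m)) :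
      ∃ F : ReducedForm (p ^ 3 * m), (z.2.1.comp (heckeRep p z.1)).Equivalent F.1 := by
    obtain ⟨x, g, hgd, hg⟩ := z
    push_cast at hgd
    have hd : g.disc < 0 := by rw [hgd]; exact neg_lt_zero.mpr hpos
    obtain ⟨F, hF, hFr⟩ := exists_equivalent_isReduced (f := g.comp (heckeRep p x))
      (by rw [disc_comp, det_heckeRep]; nlinarith) ((hg.a_pos hd).trans_le
        (hg.a_le_comp_a (by rw [det_heckeRep]; exact_mod_cast hp.ne_zero)))
    exact ⟨⟨F, by rw [hF.disc_eq, disc_comp, det_heckeRep, hgd]; push_cast; ring, hFr⟩, hF⟩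
  choose Φ hΦ using key
  have hinj : Φ.Injective := by
    rintro ⟨x, g, hgd, hg⟩ ⟨x', g', _, hg'⟩ h
    have hequiv := (hΦ _).trans ((congrArg Subtype.val h).symm ▸ (hΦ _).symm)
    obtain ⟨rfl, rfl⟩ := eq_of_comp_heckeRep_equivalent hp hp5 (by exact_mod_cast hm) hpm'
      (by rw [hgd]; push_cast; ring) hg hg' hequiv
    rfl
  have hsurj : Φ.Surjective := by
    rintro ⟨F, hFd, hF⟩
    have hFd' : F.disc = (p : ℤ) ^ 2 * -(p * m) := by rw [hFd]; push_cast; ring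
    have hd : F.disc < 0 := by rw [hFd']; nlinarith
    obtain ⟨x, g, hg, hgd, hgF⟩ := exists_comp_heckeRep_equivalent hp (by omega) hFd'
      (dvd_neg.mpr (dvd_mul_right _ _)) (neg_lt_zero.mpr hpos) (hF.a_pos hd)
    refine ⟨(x, ⟨g, by rw [hgd]; push_cast; ring, hg⟩), Subtype.ext ?_⟩
    have hΦd (z) : (Φ z).1.disc < 0 := by rw [(Φ z).2.1, ← hFd]; exact hd
    exact (Φ _).2.2.eq_of_equivalent hF ((Φ _).2.2.a_pos (hΦd _)) ((hΦ _).symm.trans hgF)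
  rw [← Nat.card_congr (Equiv.ofBijective Φ ⟨hinj, hsurj⟩), Nat.card_prod]
  simp

open Classical in
noncomputable def reducedTriples (N : ℕ) : Finset (ℕ × ℤ × ℕ) :=
  (Finset.Icc 1 N ×ˢ Finset.Icc (-(N : ℤ)) (N : ℤ) ×ˢ Finset.Icc 1 N).filter
    (fun t =>
      t.2.1 ^ 2 - 4 * (t.1 : ℤ) * (t.2.2 : ℤ) = -(N : ℤ) ∧
      |t.2.1| ≤ (t.1 : ℤ) ∧ t.1 ≤ t.2.2 ∧
      ((|t.2.1| = (t.1 : ℤ) ∨ t.1 = t.2.2) → 0 ≤ t.2.1))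

lemma disc_eq_and_isReduced_of_mem_reducedTriples {N : ℕ} {t : ℕ × ℤ × ℕ}
    (ht : t ∈ reducedTriples N) : (⟨t.1, t.2.1, t.2.2⟩ : BinQuadForm).disc = -N ∧
      (⟨t.1, t.2.1, t.2.2⟩ : BinQuadForm).IsReduced := by
  obtain ⟨-, hd, h1, h2, h3⟩ := Finset.mem_filter.mp ht
  exact ⟨hd, h1, by dsimp only; exact_mod_cast h2,
    fun h => h3 (by dsimp only at h; exact_mod_cast h)⟩

lemma card_reducedTriples {N : ℕ} (hN : 0 < N) :
    (reducedTriples N).card = Nat.card (ReducedForm N) := by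
  rw [← Nat.card_eq_finsetCard]
  refine Nat.card_congr
    { toFun := fun t => ⟨_, disc_eq_and_isReduced_of_mem_reducedTriples t.2⟩
      invFun := fun f => ⟨(f.1.a.toNat, f.1.b, f.1.c.toNat), ?_⟩
      left_inv := fun t => by simp
      right_inv := ?_ }
  · obtain ⟨f, hd, hf⟩ := f
    have ha := hf.a_pos (hd ▸ neg_lt_zero.mpr (by exact_mod_cast hN))
    have hc := hf.c_le hd hN
    have := abs_le.mp hf.abs_b_le
    have := hf.a_le_c
    have e1 : (f.a.toNat : ℤ) = f.a := Int.toNat_of_nonneg ha.le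
    have e2 : (f.c.toNat : ℤ) = f.c := Int.toNat_of_nonneg (by omega)
    simp only [reducedTriples, Finset.mem_filter, Finset.mem_product, Finset.mem_Icc]
    refine ⟨⟨⟨by omega, by omega⟩, ⟨by omega, by omega⟩, by omega, by omega⟩,
      ?_, ?_, ?_, ?_⟩
    · rw [e1, e2]; exact hd
    · rw [e1]; exact hf.abs_b_le
    · omega
    · rintro (h | h)
      · exact hf.b_nonneg (Or.inl (by rwa [e1] at h))
      · exact hf.b_nonneg (Or.inr (by omega))
  · rintro ⟨f, hd, hf⟩
    have := hf.a_pos (hd ▸ neg_lt_zero.mpr (by exact_mod_cast hN))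
    have := hf.a_le_c
    ext <;> simp only [Int.ofNat_toNat, sup_eq_left] <;> omega

theorem hurwitzClassNumber_eq_card {N : ℕ} (hN : 0 < N)
    (h3 : ∀ k : ℤ, (N : ℤ) ≠ 3 * k ^ 2) (h4 : ∀ k : ℤ, (N : ℤ) ≠ 4 * k ^ 2) :
    hurwitzClassNumber N = Nat.card (ReducedForm N) := by
  rw [hurwitzClassNumber, if_neg hN.ne', ← card_reducedTriples hN]
  refine (Finset.sum_congr (s₂ := reducedTriples N) rfl fun t ht => ?_).trans
    (by rw [Finset.sum_const, nsmul_one])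
  obtain ⟨a, b, c⟩ := t
  obtain ⟨-, hd, -⟩ := Finset.mem_filter.mp ht
  rw [if_neg, if_neg]
  · rintro ⟨rfl, hac : a = c⟩; subst hac; exact h4 a (by linarith)
  · rintro ⟨hb : b = a, hac : a = c⟩; subst hb hac; exact h3 a (by linarith)

/-- For every integer n ≥ 0, H(5 ^ 4·n + 5 ^ 3) ≡ 0 (mod 3). -/
theorem hurwitz_congruence_stmt0 :
    ∀ n : ℕ, RatModZero 3 (hurwitzClassNumber (5 ^ 4 * n + 5 ^ 3)) := by
  intro n
  have hm : ¬ 5 ∣ 5 * n + 1 := by omega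
  have hsq (d : ℤ) (hd : ¬ (5 : ℤ) ∣ d) (k : ℤ) :
      ((5 ^ 3 * (5 * n + 1) : ℕ) : ℤ) ≠ d * k ^ 2 := by
    push_cast; exact Int.pow_three_mul_ne_mul_sq (by norm_num) hd (by omega) k
  rw [show 5 ^ 4 * n + 5 ^ 3 = 5 ^ 3 * (5 * n + 1) by ring,
    hurwitzClassNumber_eq_card (by positivity) (hsq 3 (by norm_num)) (hsq 4 (by norm_num)),
    card_reducedForm_prime_pow_three_mul Nat.prime_five le_rfl (by omega) hm]
  refine ⟨(2 * Nat.card (ReducedForm (5 * (5 * n + 1))) : ℕ), by push_cast; ring, ?_⟩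
  rw [Rat.den_natCast]
  norm_num
end

section
/- For every integer n ≥ 0, the Hurwitz class number satisfies H(3^3·n + 3^2) ≡ 0 (mod 5). -/
/-!
We prove `H(9M) = 5 H(M)` for `M ≡ 1 (mod 3)`; since `6 H(M)` is an integer, the congruence follows.

Write `H(9M)` as a weighted count of reduced forms of discriminant `-9M`. Those divisible by `3` are
`3 G` with `G` of discriminant `-M`, and contribute `H(M)`. Every other one is equivalent to
`G ∘ L` with `det L = 3` and `disc G = -M`. Because `-M` is not a square mod `3`, forms of
discriminant `-M` are anisotropic mod `3`; hence `G` is determined up to equivalence, and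
`G ∘ L ~ G ∘ L'` happens only when `L` and `L'` differ by an automorphism of `G`. Running `L` over
the four Hermite normal forms of determinant `3`, the primitive classes above `G` are the orbits of
`Aut G` on them, all with automorphism group `{±1}`: four classes if `Aut G = {±1}`, two if
`G = a (x² + y²)`. Either way they weigh `4 · weight G` in total.
-/

open Matrix

local notation "M₂" => Matrix (Fin 2) (Fin 2) ℤ

lemma col_ne_zero_of_det_ne_zero {U : M₂} (hU : U.det ≠ 0) (j : Fin 2) : U 0 j ≠ 0 ∨ U 1 j ≠ 0 := by
  by_contra! h
  apply hU
  fin_cases j <;> simp_all [Matrix.det_fin_two]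

lemma three_dvd_iff_cast_eq_zero (z : ℤ) : 3 ∣ z ↔ (z : ZMod 3) = 0 :=
  (ZMod.intCast_zmod_eq_zero_iff_dvd z 3).symm

lemma three_dvd_sub_of_cast_eq {u v : ℤ} (h : (u : ZMod 3) = v) : 3 ∣ u - v := by
  rw [three_dvd_iff_cast_eq_zero]; push_cast; rw [h, sub_self]

@[ext]
structure BinaryQF where
  a : ℤ
  b : ℤ
  c : ℤ
  deriving DecidableEq

namespace BinaryQF

instance : SMul ℤ BinaryQF := ⟨fun k f => ⟨k * f.a, k * f.b, k * f.c⟩⟩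

@[simp] lemma smul_a (k : ℤ) (f : BinaryQF) : (k • f).a = k * f.a := rfl
@[simp] lemma smul_b (k : ℤ) (f : BinaryQF) : (k • f).b = k * f.b := rfl
@[simp] lemma smul_c (k : ℤ) (f : BinaryQF) : (k • f).c = k * f.c := rfl

lemma smul_right_injective {k : ℤ} (hk : k ≠ 0) : Function.Injective fun f : BinaryQF => k • f :=
  fun f g h => by
    simp only [BinaryQF.ext_iff, smul_a, smul_b, smul_c] at h ⊢
    exact ⟨mul_left_cancel₀ hk h.1, mul_left_cancel₀ hk h.2.1, mul_left_cancel₀ hk h.2.2⟩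

def disc (f : BinaryQF) : ℤ := f.b ^ 2 - 4 * f.a * f.c

def eval (f : BinaryQF) (x y : ℤ) : ℤ := f.a * x ^ 2 + f.b * x * y + f.c * y ^ 2

/-- The form `(x, y) ↦ f (U (x, y))`. -/
def subst (f : BinaryQF) (U : M₂) : BinaryQF where
  a := f.eval (U 0 0) (U 1 0)
  b := 2 * f.a * U 0 0 * U 0 1 + f.b * (U 0 0 * U 1 1 + U 0 1 * U 1 0) + 2 * f.c * U 1 0 * U 1 1
  c := f.eval (U 0 1) (U 1 1)

@[simp] lemma subst_of (f : BinaryQF) (p q r s : ℤ) :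
    f.subst !![p, q; r, s] =
      ⟨f.eval p r, 2 * f.a * p * q + f.b * (p * s + q * r) + 2 * f.c * r * s, f.eval q s⟩ := rfl

lemma subst_mul (f : BinaryQF) (U V : M₂) : f.subst (U * V) = (f.subst U).subst V := by
  ext <;> simp [subst, eval, Matrix.mul_apply, Fin.sum_univ_two] <;> ring

@[simp] lemma subst_one (f : BinaryQF) : f.subst 1 = f := by
  ext <;> simp [subst, eval]

lemma subst_smul (f : BinaryQF) (k : ℤ) (U : M₂) : f.subst (k • U) = k ^ 2 • f.subst U := by
  ext <;> simp [subst, eval] <;> ring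

lemma smul_subst (f : BinaryQF) (k : ℤ) (U : M₂) : (k • f).subst U = k • f.subst U := by
  ext <;> simp [subst, eval] <;> ring

lemma disc_subst (f : BinaryQF) (U : M₂) : (f.subst U).disc = U.det ^ 2 * f.disc := by
  simp [disc, subst, eval, Matrix.det_fin_two]; ring

lemma disc_smul (k : ℤ) (f : BinaryQF) : (k • f).disc = k ^ 2 * f.disc := by
  simp only [disc, smul_a, smul_b, smul_c]; ring

lemma subst_adjugate_cancel (f : BinaryQF) {U : M₂} (hU : U.det = 1) :
    (f.subst U).subst U.adjugate = f := by
  rw [← subst_mul, mul_adjugate, hU, one_smul, subst_one]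

def Equivalent (f g : BinaryQF) : Prop := ∃ U : M₂, U.det = 1 ∧ f.subst U = g

namespace Equivalent

@[refl] lemma refl (f : BinaryQF) : f.Equivalent f := ⟨1, det_one, subst_one f⟩

lemma symm {f g : BinaryQF} (h : f.Equivalent g) : g.Equivalent f := by
  obtain ⟨U, hU, rfl⟩ := h
  exact ⟨U.adjugate, by simp [det_adjugate, hU], subst_adjugate_cancel f hU⟩

lemma trans {f g h : BinaryQF} (hfg : f.Equivalent g) (hgh : g.Equivalent h) : f.Equivalent h := by
  obtain ⟨U, hU, rfl⟩ := hfg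
  obtain ⟨V, hV, rfl⟩ := hgh
  exact ⟨U * V, by rw [det_mul, hU, hV, one_mul], subst_mul f U V⟩

lemma disc_eq {f g : BinaryQF} (h : f.Equivalent g) : g.disc = f.disc := by
  obtain ⟨U, hU, rfl⟩ := h
  rw [disc_subst, hU, one_pow, one_mul]

end Equivalent

lemma four_mul_a_mul_eval (f : BinaryQF) (x y : ℤ) :
    4 * f.a * f.eval x y = (2 * f.a * x + f.b * y) ^ 2 - f.disc * y ^ 2 := by
  simp only [eval, disc]; ring

def IsPosDef (f : BinaryQF) : Prop := f.disc < 0 ∧ 0 < f.a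

lemma IsPosDef.eval_pos {f : BinaryQF} (hf : f.IsPosDef) {x y : ℤ} (hxy : x ≠ 0 ∨ y ≠ 0) :
    0 < f.eval x y := by
  have key := f.four_mul_a_mul_eval x y
  obtain ⟨hd, ha⟩ := hf
  rcases eq_or_ne y 0 with rfl | hy
  · have hx : x ≠ 0 := hxy.resolve_right (not_not.2 rfl)
    have : f.eval x 0 = f.a * x ^ 2 := by simp [eval]
    rw [this]
    positivity
  · have : 0 < 4 * f.a * f.eval x y := by
      rw [key]; nlinarith [sq_nonneg (2 * f.a * x + f.b * y), pow_pos (sq_pos_of_ne_zero hy) 1]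
    exact pos_of_mul_pos_right this (by positivity)

lemma IsPosDef.of_eval_pos {f : BinaryQF} (hd : f.disc < 0) {x y : ℤ} (h : 0 < f.eval x y) :
    f.IsPosDef := by
  refine ⟨hd, ?_⟩
  have key := f.four_mul_a_mul_eval x y
  rcases lt_trichotomy f.a 0 with ha | ha | ha
  · nlinarith [sq_nonneg (2 * f.a * x + f.b * y), sq_nonneg y]
  · simp only [disc, ha] at hd; nlinarith [sq_nonneg f.b]
  · exact ha

lemma IsPosDef.subst {f : BinaryQF} (hf : f.IsPosDef) {U : M₂} (hU : U.det ≠ 0) :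
    (f.subst U).IsPosDef := by
  refine ⟨?_, hf.eval_pos (col_ne_zero_of_det_ne_zero hU 0)⟩
  rw [disc_subst]
  exact mul_neg_of_pos_of_neg (by positivity) hf.1

lemma IsPosDef.of_subst {f : BinaryQF} {U : M₂} (hU : U.det ≠ 0) (h : (f.subst U).IsPosDef) :
    f.IsPosDef := by
  have hd : f.disc < 0 := by
    have := h.1
    rw [disc_subst] at this
    exact neg_of_mul_neg_right this (by positivity)
  exact IsPosDef.of_eval_pos hd h.2

lemma Equivalent.isPosDef {f g : BinaryQF} (h : f.Equivalent g) (hf : f.IsPosDef) : g.IsPosDef := by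
  obtain ⟨U, hU, rfl⟩ := h
  exact hf.subst (by rw [hU]; exact one_ne_zero)

def IsReduced (f : BinaryQF) : Prop :=
  |f.b| ≤ f.a ∧ f.a ≤ f.c ∧ (|f.b| = f.a ∨ f.a = f.c → 0 ≤ f.b)

namespace IsReduced

variable {f : BinaryQF} (hf : f.IsReduced)
include hf

lemma sub_abs_add_le_eval {x y : ℤ} (hx : x ≠ 0) (hy : y ≠ 0) :
    f.a - |f.b| + f.c ≤ f.eval x y := by
  obtain ⟨hba, hac, -⟩ := hf
  have hX : 1 ≤ |x| := Int.one_le_abs hx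
  have hY : 1 ≤ |y| := Int.one_le_abs hy
  have hbxy : -(|f.b| * (|x| * |y|)) ≤ f.b * x * y := by
    rw [mul_assoc, ← abs_mul, ← abs_mul]; exact neg_abs_le _
  have hXY : 0 ≤ |x| * |y| - 1 := by nlinarith
  have hYY : 0 ≤ |y| ^ 2 - 1 := by nlinarith
  have hA : 0 ≤ f.a := (abs_nonneg _).trans hba
  simp only [eval, ← sq_abs x, ← sq_abs y]
  nlinarith [mul_nonneg (sub_nonneg.2 hba) hXY, mul_nonneg (sub_nonneg.2 hac) hYY,
    mul_nonneg hA (sq_nonneg (|x| - |y|)), mul_nonneg hA hXY]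

lemma c_le_eval (x : ℤ) {y : ℤ} (hy : y ≠ 0) : f.c ≤ f.eval x y := by
  rcases eq_or_ne x 0 with rfl | hx
  · have : 1 ≤ y ^ 2 := by nlinarith [Int.one_le_abs hy, sq_abs y]
    have : 0 ≤ f.c := (abs_nonneg _).trans (hf.1.trans hf.2.1)
    simp only [eval]; nlinarith
  · linarith [hf.sub_abs_add_le_eval hx hy, hf.1]

lemma a_le_eval {x y : ℤ} (hxy : x ≠ 0 ∨ y ≠ 0) : f.a ≤ f.eval x y := by
  rcases eq_or_ne y 0 with rfl | hy
  · have : 1 ≤ x ^ 2 := by nlinarith [Int.one_le_abs (hxy.resolve_right (not_not.2 rfl)), sq_abs x]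
    have : 0 ≤ f.a := (abs_nonneg _).trans hf.1
    simp only [eval]; nlinarith
  · exact hf.2.1.trans (hf.c_le_eval x hy)

lemma a_le_of_equivalent {g : BinaryQF} (h : f.Equivalent g) : f.a ≤ g.a := by
  obtain ⟨U, hU, rfl⟩ := h
  exact hf.a_le_eval (col_ne_zero_of_det_ne_zero (by rw [hU]; exact one_ne_zero) 0)

lemma c_le_of_equivalent {g : BinaryQF} (h : f.Equivalent g) (ha : g.a = f.a) : f.c ≤ g.c := by
  obtain ⟨U, hU, rfl⟩ := h
  rw [det_fin_two] at hU
  change f.c ≤ f.eval (U 0 1) (U 1 1)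
  rcases eq_or_ne (U 1 1) 0 with hs | hs
  · -- then `U 0 1 = ±1`, so the new `c` is `f.a`, while the new `a` is at least `f.c`
    have hq : U 0 1 ^ 2 = 1 := by
      have : U 0 1 * U 1 0 = -1 := by rw [hs] at hU; linarith
      rcases Int.eq_one_or_neg_one_of_mul_eq_neg_one this with h | h <;> simp [h]
    have hr : U 1 0 ≠ 0 := by rintro h; rw [hs, h] at hU; simp at hU
    have hc : f.eval (U 0 1) 0 = f.a := by simp [eval, hq]
    have := hf.c_le_eval (U 0 0) hr
    change f.eval (U 0 0) (U 1 0) = f.a at ha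
    rw [hs, hc]
    linarith
  · exact hf.c_le_eval _ hs

end IsReduced

lemma IsReduced.b_nonneg_of_equivalent {f g : BinaryQF} (hf : f.IsReduced) (hg : g.IsReduced)
    (h : f.Equivalent g) (ha : g.a = f.a) (hc : g.c = f.c) (hb : g.b = -f.b) : 0 ≤ g.b := by
  by_contra! hneg
  have hstrict : ¬(|g.b| = g.a ∨ g.a = g.c) := fun h' => absurd (hg.2.2 h') (not_le.2 hneg)
  rw [not_or] at hstrict
  have hba : |f.b| < f.a := by
    rw [← abs_neg, ← hb, ← ha]; exact lt_of_le_of_ne hg.1 hstrict.1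
  have hac : f.a < f.c := by rw [← ha, ← hc]; exact lt_of_le_of_ne hg.2.1 hstrict.2
  obtain ⟨U, hU, rfl⟩ := h
  change f.eval (U 0 0) (U 1 0) = f.a at ha
  have hr : U 1 0 = 0 := by
    by_contra hr
    linarith [hf.c_le_eval (U 0 0) hr]
  have hps : U 0 0 * U 1 1 = 1 := by rw [det_fin_two, hr] at hU; linarith
  have hpq : f.a * (U 0 0 * U 0 1) = -f.b := by
    change 2 * f.a * U 0 0 * U 0 1 + f.b * (U 0 0 * U 1 1 + U 0 1 * U 1 0)
      + 2 * f.c * U 1 0 * U 1 1 = -f.b at hb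
    rw [hr, hps] at hb
    linarith
  have hpq0 : U 0 0 * U 0 1 = 0 := by
    have hfa : 0 < f.a := (abs_nonneg _).trans_lt hba
    have : |f.a * (U 0 0 * U 0 1)| < f.a := by rw [hpq, abs_neg]; exact hba
    rw [abs_mul, abs_of_pos hfa] at this
    exact Int.abs_lt_one_iff.1 (by nlinarith [abs_nonneg (U 0 0 * U 0 1)])
  rw [hpq0, mul_zero] at hpq
  linarith

lemma IsReduced.eq_of_equivalent {f g : BinaryQF} (hf : f.IsReduced) (hg : g.IsReduced)
    (h : f.Equivalent g) : f = g := by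
  have ha : g.a = f.a := le_antisymm (hg.a_le_of_equivalent h.symm) (hf.a_le_of_equivalent h)
  have hc : g.c = f.c :=
    le_antisymm (hg.c_le_of_equivalent h.symm ha.symm) (hf.c_le_of_equivalent h ha)
  have hb : g.b = f.b := by
    have hsq := h.disc_eq
    simp only [disc, ha, hc] at hsq
    rcases sq_eq_sq_iff_eq_or_eq_neg.1 (by linarith : g.b ^ 2 = f.b ^ 2) with hb | hb
    · exact hb
    · have := hf.b_nonneg_of_equivalent hg h ha hc hb
      have := hg.b_nonneg_of_equivalent hf h.symm ha.symm hc.symm (by rw [hb, neg_neg])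
      linarith
  ext <;> simp [ha, hb, hc]

lemma IsPosDef.exists_equivalent_forall_a_le {f : BinaryQF} (hf : f.IsPosDef) :
    ∃ g, f.Equivalent g ∧ ∀ h, f.Equivalent h → g.a ≤ h.a := by
  classical
  have hex : ∃ n : ℕ, ∃ g, f.Equivalent g ∧ g.a = n :=
    ⟨f.a.toNat, f, .refl f, (Int.toNat_of_nonneg hf.2.le).symm⟩
  obtain ⟨g, hfg, hg⟩ := Nat.find_spec hex
  refine ⟨g, hfg, fun h hfh => ?_⟩
  have hpos := (hfh.isPosDef hf).2
  have := Nat.find_min' hex ⟨h, hfh, (Int.toNat_of_nonneg hpos.le).symm⟩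
  omega

lemma subst_S (f : BinaryQF) : f.subst !![0, -1; 1, 0] = ⟨f.c, -f.b, f.a⟩ := by
  ext <;> simp [eval]

lemma Equivalent.subst_S {f g : BinaryQF} (h : f.Equivalent g) : f.Equivalent ⟨g.c, -g.b, g.a⟩ :=
  h.trans ⟨_, by simp [det_fin_two], g.subst_S⟩

lemma IsPosDef.exists_reduced {f : BinaryQF} (hf : f.IsPosDef) :
    ∃ g, g.IsReduced ∧ f.Equivalent g := by
  obtain ⟨g, hfg, hmin⟩ := hf.exists_equivalent_forall_a_le
  have hga : 0 < g.a := (hfg.isPosDef hf).2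
  -- translating by `k = ⌊(a - b) / 2a⌋` brings `b` into `(-a, a]`
  set k := (g.a - g.b) / (2 * g.a)
  set g₁ := g.subst !![1, k; 0, 1]
  have hfg₁ : f.Equivalent g₁ := hfg.trans ⟨_, by simp [det_fin_two], rfl⟩
  have ha₁ : g₁.a = g.a := by simp [g₁, eval]
  have hb₁ : -g₁.a < g₁.b ∧ g₁.b ≤ g₁.a := by
    have h1 := Int.emod_nonneg (g.a - g.b) (by omega : 2 * g.a ≠ 0)
    have h2 := Int.emod_lt_of_pos (g.a - g.b) (by omega : 0 < 2 * g.a)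
    have h3 := Int.mul_ediv_add_emod (g.a - g.b) (2 * g.a)
    rw [ha₁]
    simp only [g₁, subst_of]
    constructor <;> linarith
  have hac₁ : g₁.a ≤ g₁.c := by
    rw [ha₁]
    exact hmin _ hfg₁.subst_S
  by_cases hfin : g₁.a = g₁.c ∧ g₁.b < 0
  · refine ⟨_, ⟨?_, hfin.1.ge, fun _ => ?_⟩, hfg₁.subst_S⟩
    · rw [abs_neg, ← hfin.1]; exact abs_le.2 ⟨hb₁.1.le, hb₁.2⟩
    · exact (neg_pos.2 hfin.2).le
  · refine ⟨g₁, ⟨abs_le.2 ⟨hb₁.1.le, hb₁.2⟩, hac₁, ?_⟩, hfg₁⟩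
    rintro (h | h)
    · rcases abs_cases g₁.b with ⟨h', _⟩ | ⟨h', _⟩ <;> linarith
    · by_contra hneg
      exact hfin ⟨h, not_le.1 hneg⟩

open Classical in
noncomputable def reduction (f : BinaryQF) : BinaryQF :=
  if h : ∃ g, g.IsReduced ∧ f.Equivalent g then h.choose else f

lemma IsPosDef.reduction_spec {f : BinaryQF} (hf : f.IsPosDef) :
    f.reduction.IsReduced ∧ f.Equivalent f.reduction := by
  rw [reduction, dif_pos hf.exists_reduced]
  exact hf.exists_reduced.choose_spec

lemma reduction_eq_of_equivalent {f g : BinaryQF} (hg : g.IsReduced) (h : f.Equivalent g) :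
    f.reduction = g := by
  have hex : ∃ g, g.IsReduced ∧ f.Equivalent g := ⟨g, hg, h⟩
  rw [reduction, dif_pos hex]
  exact hex.choose_spec.1.eq_of_equivalent hg (hex.choose_spec.2.symm.trans h)

def HasTrivialAut (f : BinaryQF) : Prop :=
  ∀ V : M₂, V.det = 1 → f.subst V = f → V = 1 ∨ V = -1

lemma HasTrivialAut.of_equivalent {f g : BinaryQF} (hf : f.HasTrivialAut) (h : f.Equivalent g) :
    g.HasTrivialAut := by
  obtain ⟨W, hW, rfl⟩ := h
  intro R hR hfR
  have hWW : W.adjugate * W = 1 := by rw [adjugate_mul, hW, one_smul]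
  have hconj : W * R * W.adjugate = 1 ∨ W * R * W.adjugate = -1 := by
    refine hf _ (by simp [det_adjugate, hW, hR]) ?_
    rw [subst_mul, subst_mul, hfR, subst_adjugate_cancel f hW]
  have hR' : R = W.adjugate * (W * R * W.adjugate) * W := by
    simp only [Matrix.mul_assoc, hWW, Matrix.mul_one]
    rw [← Matrix.mul_assoc, hWW, Matrix.one_mul]
  rcases hconj with h | h <;> rw [hR', h] <;> simp [hWW]

def weight (f : BinaryQF) : ℚ :=
  if f.b = f.a ∧ f.a = f.c then 1 / 3 else if f.b = 0 ∧ f.a = f.c then 1 / 2 else 1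

lemma HasTrivialAut.weight_eq_one {f : BinaryQF} (hf : f.HasTrivialAut) : f.weight = 1 := by
  rw [weight]
  split_ifs with h₃ h₂
  · rcases hf !![0, -1; 1, 1] (by simp [det_fin_two])
      (by ext <;> simp [eval] <;> linarith [h₃.1, h₃.2]) with h | h <;>
      simp [Matrix.one_fin_two] at h
  · rcases hf !![0, -1; 1, 0] (by simp [det_fin_two]) (by rw [subst_S]; ext <;> simp [h₂])
      with h | h <;> simp [Matrix.one_fin_two] at h
  · rfl

lemma IsReduced.eval_eq_a {f : BinaryQF} (hf : f.IsReduced) (ha : 0 < f.a)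
    (hf₃ : ¬(f.b = f.a ∧ f.c = f.a)) {x y : ℤ} (h : f.eval x y = f.a) :
    (y = 0 ∧ (x = 1 ∨ x = -1)) ∨ (x = 0 ∧ f.c = f.a ∧ (y = 1 ∨ y = -1)) := by
  have sq_eq_one {z : ℤ} {u : ℤ} (hu : u ≠ 0) (hz : u * z ^ 2 = u) : z = 1 ∨ z = -1 :=
    sq_eq_sq_iff_eq_or_eq_neg.1 (by rw [one_pow]; exact mul_left_cancel₀ hu (hz.trans (mul_one u).symm))
  rcases eq_or_ne y 0 with rfl | hy
  · exact .inl ⟨rfl, sq_eq_one ha.ne' (by simpa [eval] using h)⟩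
  · have hc : f.c = f.a := le_antisymm (h ▸ hf.c_le_eval x hy) hf.2.1
    have hx : x = 0 := by
      by_contra hx
      have := hf.sub_abs_add_le_eval hx hy
      have hb : |f.b| = f.a := le_antisymm hf.1 (by linarith)
      exact hf₃ ⟨(abs_of_nonneg (hf.2.2 (.inl hb))).symm.trans hb, hc⟩
    subst hx
    exact .inr ⟨rfl, hc, sq_eq_one (hc ▸ ha.ne') (by simpa [eval, hc] using h)⟩

lemma IsReduced.eq_of_subst_eq_self {f : BinaryQF} (hf : f.IsReduced) (ha : 0 < f.a)
    (hf₃ : ¬(f.b = f.a ∧ f.c = f.a)) {A : M₂} (hA : A.det = 1) (hfA : f.subst A = f) :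
    A = 1 ∨ A = -1 ∨ (f.b = 0 ∧ f.c = f.a ∧ (A = !![0, -1; 1, 0] ∨ A = !![0, 1; -1, 0])) := by
  rw [eta_fin_two A] at hA hfA ⊢
  rw [det_fin_two_of] at hA
  simp only [subst_of, BinaryQF.ext_iff] at hfA
  obtain ⟨h₁, h₂, -⟩ := hfA
  rcases hf.eval_eq_a ha hf₃ h₁ with ⟨hr, hp⟩ | ⟨hp, hc, hr⟩
  · rw [hr] at hA h₂ ⊢
    have hq : A 0 1 = 0 := by
      have : 2 * (f.a * (A 0 1 * A 0 0)) = 0 := by linear_combination h₂ - f.b * hA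
      rcases hp with hp | hp <;> simpa [hp, ha.ne'] using this
    rcases hp with hp | hp <;> rw [hp, hq] at hA ⊢ <;> simp [Matrix.one_fin_two] <;> linarith
  · rw [hp] at hA h₂ ⊢
    have hb : 2 * f.b = 2 * (f.a * (A 1 0 * A 1 1)) := by
      linear_combination -h₂ - f.b * hA + 2 * A 1 0 * A 1 1 * hc
    have hb := mul_left_cancel₀ two_ne_zero hb
    have hrs : A 1 0 * A 1 1 = 0 := by
      by_contra hrs
      have : f.a ≤ |f.b| := by
        rw [hb, abs_mul, abs_of_pos ha]; nlinarith [Int.one_le_abs hrs]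
      have hba : |f.b| = f.a := le_antisymm hf.1 this
      exact hf₃ ⟨(abs_of_nonneg (hf.2.2 (.inl hba))).symm.trans hba, hc⟩
    have hs : A 1 1 = 0 := by rcases hr with hr | hr <;> simpa [hr] using hrs
    rw [hs, mul_zero, mul_zero] at hb
    rw [hs] at hA ⊢
    refine .inr (.inr ⟨hb, hc, ?_⟩)
    rcases hr with hr | hr <;> rw [hr] at hA ⊢ <;> simp <;> linarith

lemma three_dvd_of_three_dvd_eval {G : BinaryQF} (hG : G.disc % 3 = 2) {x y : ℤ}
    (h : 3 ∣ G.eval x y) : 3 ∣ x ∧ 3 ∣ y := by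
  have key : ∀ a b c u v : ZMod 3, b ^ 2 - 4 * a * c = 2 →
      a * u ^ 2 + b * u * v + c * v ^ 2 = 0 → u = 0 ∧ v = 0 := by decide
  have hd : ((G.disc : ℤ) : ZMod 3) = 2 := by
    rw [← ZMod.intCast_mod, Nat.cast_ofNat, hG]; rfl
  simp only [three_dvd_iff_cast_eq_zero] at h ⊢
  simp only [disc, eval] at hd h
  push_cast at hd h
  exact key _ _ _ _ _ hd h

lemma exists_eq_smul_of_three_dvd {G : BinaryQF} (hG : G.disc % 3 = 2) {B : M₂}
    (ha : 3 ∣ (G.subst B).a) (hc : 3 ∣ (G.subst B).c) : ∃ A : M₂, B = (3 : ℤ) • A := by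
  obtain ⟨h00, h10⟩ := three_dvd_of_three_dvd_eval hG ha
  obtain ⟨h01, h11⟩ := three_dvd_of_three_dvd_eval hG hc
  refine ⟨Matrix.of fun i j => B i j / 3, ?_⟩
  ext i j
  fin_cases i <;> fin_cases j <;> simp [Int.mul_ediv_cancel', *]

lemma exists_mul_eq_mul_of_subst_eq {G G' : BinaryQF} (hG : G.disc % 3 = 2) {L L' V : M₂}
    (hL : L.det = 3) (hL' : L'.det = 3) (hV : V.det = 1)
    (h : (G.subst L).subst V = G'.subst L') :
    ∃ A : M₂, A.det = 1 ∧ G.subst A = G' ∧ L * V = A * L' := by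
  have hB : G.subst (L * V * L'.adjugate) = (9 : ℤ) • G' := by
    rw [subst_mul, subst_mul, h, ← subst_mul, mul_adjugate, hL', subst_smul, subst_one]
    norm_num
  obtain ⟨A, hA⟩ := exists_eq_smul_of_three_dvd hG (B := L * V * L'.adjugate)
    (by rw [hB, smul_a]; exact ⟨3 * G'.a, by ring⟩) (by rw [hB, smul_c]; exact ⟨3 * G'.c, by ring⟩)
  refine ⟨A, ?_, ?_, ?_⟩
  · have hdet := congrArg Matrix.det hA
    rw [det_mul, det_mul, det_adjugate, hL, hV, hL', det_smul] at hdet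
    norm_num at hdet
    linarith
  · refine smul_right_injective (by norm_num : (9 : ℤ) ≠ 0) ?_
    simp only
    rw [← hB, hA, subst_smul]
    norm_num
  · refine _root_.smul_right_injective M₂ (three_ne_zero (α := ℤ)) ?_
    simp only
    calc (3 : ℤ) • (L * V) = L * V * (L'.adjugate * L') := by
          rw [adjugate_mul, hL', Matrix.mul_smul, Matrix.mul_one]
      _ = (3 : ℤ) • (A * L') := by rw [← Matrix.mul_assoc, hA, Matrix.smul_mul]

def IsPrimitiveAt (p : ℤ) (f : BinaryQF) : Prop := ¬∃ g : BinaryQF, f = p • g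

lemma Equivalent.isPrimitiveAt {p : ℤ} {f g : BinaryQF} (h : f.Equivalent g)
    (hf : f.IsPrimitiveAt p) : g.IsPrimitiveAt p := by
  rintro ⟨g', rfl⟩
  obtain ⟨U, hU, hfU⟩ := h.symm
  exact hf ⟨g'.subst U, by rw [← hfU, smul_subst]⟩

lemma isPrimitiveAt_subst {G : BinaryQF} (hG : G.disc % 3 = 2) {L : M₂} (hL : L.det = 3) :
    (G.subst L).IsPrimitiveAt 3 := by
  rintro ⟨g, hg⟩
  obtain ⟨A, rfl⟩ := exists_eq_smul_of_three_dvd hG (B := L)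
    (by rw [hg, smul_a]; exact dvd_mul_right _ _) (by rw [hg, smul_c]; exact dvd_mul_right _ _)
  rw [det_smul, Fintype.card_fin] at hL
  omega

lemma exists_three_dvd_subst_a {t : BinaryQF} (ht : 3 ∣ t.disc) :
    ∃ U : M₂, U.det = 1 ∧ 3 ∣ (t.subst U).a := by
  have key : ∀ a b c : ZMod 3, b ^ 2 - 4 * a * c = 0 →
      a = 0 ∨ a + b + c = 0 ∨ a + 2 * b + 4 * c = 0 ∨ c = 0 := by decide
  rw [three_dvd_iff_cast_eq_zero] at ht
  simp only [disc] at ht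
  push_cast at ht
  rcases key _ _ _ ht with h | h | h | h
  · exact ⟨!![1, 0; 0, 1], by simp [det_fin_two], by rw [three_dvd_iff_cast_eq_zero]; simpa [eval] using h⟩
  · refine ⟨!![1, 0; 1, 1], by simp [det_fin_two], ?_⟩
    rw [three_dvd_iff_cast_eq_zero]; simp [eval]; linear_combination h
  · refine ⟨!![1, 0; 2, 1], by simp [det_fin_two], ?_⟩
    rw [three_dvd_iff_cast_eq_zero]; simp [eval]; linear_combination h
  · exact ⟨!![0, -1; 1, 0], by simp [det_fin_two], by rw [three_dvd_iff_cast_eq_zero]; simpa [eval] using h⟩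

lemma IsPrimitiveAt.exists_equivalent_subst {t : BinaryQF} (ht : t.IsPrimitiveAt 3)
    (h9 : 9 ∣ t.disc) : ∃ G : BinaryQF, t.Equivalent (G.subst !![3, 0; 0, 1]) := by
  obtain ⟨U, hU, a₁, ha₁⟩ := exists_three_dvd_subst_a (dvd_trans ⟨3, rfl⟩ h9)
  set F := t.subst U
  have htF : t.Equivalent F := ⟨U, hU, rfl⟩
  obtain ⟨D, hD⟩ : 9 ∣ F.disc := htF.disc_eq ▸ h9
  simp only [disc, ha₁] at hD
  obtain ⟨b₁, hb₁⟩ : 3 ∣ F.b :=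
    Int.prime_three.dvd_of_dvd_pow (n := 2) ⟨3 * D + 4 * a₁ * F.c, by linarith⟩
  have hc : ¬3 ∣ F.c := by
    rintro ⟨c₁, hc₁⟩
    exact htF.isPrimitiveAt ht ⟨⟨a₁, b₁, c₁⟩, by ext <;> simp [ha₁, hb₁, hc₁]⟩
  obtain ⟨a₂, rfl⟩ : 3 ∣ a₁ := by
    have h4 : 3 ∣ 4 * (a₁ * F.c) := ⟨b₁ ^ 2 - D, by rw [hb₁] at hD; linarith⟩
    rcases Int.prime_three.dvd_or_dvd h4 with h | h
    · norm_num at h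
    · exact (Int.prime_three.dvd_or_dvd h).resolve_right hc
  refine ⟨⟨a₂, b₁, F.c⟩, htF.trans ?_⟩
  convert Equivalent.refl F using 1
  ext <;> simp [eval, ha₁, hb₁] <;> ring

/-- Hermite normal forms of the integer matrices of determinant `3`. -/
def detThreeRep : Fin 4 → M₂ := ![!![3, 0; 0, 1], !![1, 0; 0, 3], !![1, 0; 1, 3], !![1, 0; 2, 3]]

lemma det_detThreeRep (i : Fin 4) : (detThreeRep i).det = 3 := by
  fin_cases i <;> simp [detThreeRep, det_fin_two]

lemma exists_eq_detThreeRep_mul {W : M₂} (hW : W.det = 3) :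
    ∃ i V, V.det = 1 ∧ W = detThreeRep i * V := by
  have key : ∀ p q r s : ZMod 3, p * s - q * r = 0 → (p = 0 ∧ q = 0) ∨ (r = 0 ∧ s = 0) ∨
      (r = p ∧ s = q) ∨ (r = 2 * p ∧ s = 2 * q) := by decide
  rw [eta_fin_two W] at hW ⊢
  rw [det_fin_two_of] at hW
  have h0 : ((W 0 0 : ℤ) : ZMod 3) * W 1 1 - W 0 1 * W 1 0 = 0 := by
    have := (three_dvd_iff_cast_eq_zero _).1 ⟨1, hW⟩
    push_cast at this
    exact this
  rcases key _ _ _ _ h0 with ⟨hp, hq⟩ | ⟨hr, hs⟩ | ⟨hr, hs⟩ | ⟨hr, hs⟩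
  · obtain ⟨p, hp⟩ := three_dvd_sub_of_cast_eq (u := W 0 0) (v := 0) (by simpa using hp)
    obtain ⟨q, hq⟩ := three_dvd_sub_of_cast_eq (u := W 0 1) (v := 0) (by simpa using hq)
    refine ⟨0, !![p, q; W 1 0, W 1 1], ?_, ?_⟩
    · rw [det_fin_two_of]
      exact mul_left_cancel₀ three_ne_zero (by linear_combination hW - W 1 1 * hp + W 1 0 * hq)
    · simp [detThreeRep]; omega
  · obtain ⟨r, hr⟩ := three_dvd_sub_of_cast_eq (u := W 1 0) (v := 0) (by simpa using hr)
    obtain ⟨s, hs⟩ := three_dvd_sub_of_cast_eq (u := W 1 1) (v := 0) (by simpa using hs)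
    refine ⟨1, !![W 0 0, W 0 1; r, s], ?_, ?_⟩
    · rw [det_fin_two_of]
      exact mul_left_cancel₀ three_ne_zero (by linear_combination hW - W 0 0 * hs + W 0 1 * hr)
    · simp [detThreeRep]; omega
  · obtain ⟨r, hr⟩ := three_dvd_sub_of_cast_eq hr
    obtain ⟨s, hs⟩ := three_dvd_sub_of_cast_eq hs
    refine ⟨2, !![W 0 0, W 0 1; r, s], ?_, ?_⟩
    · rw [det_fin_two_of]
      exact mul_left_cancel₀ three_ne_zero (by linear_combination hW - W 0 0 * hs + W 0 1 * hr)
    · simp [detThreeRep]; omega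
  · obtain ⟨r, hr⟩ := three_dvd_sub_of_cast_eq (u := W 1 0) (v := 2 * W 0 0) (by push_cast; exact hr)
    obtain ⟨s, hs⟩ := three_dvd_sub_of_cast_eq (u := W 1 1) (v := 2 * W 0 1) (by push_cast; exact hs)
    refine ⟨3, !![W 0 0, W 0 1; r, s], ?_, ?_⟩
    · rw [det_fin_two_of]
      exact mul_left_cancel₀ three_ne_zero (by linear_combination hW - W 0 0 * hs + W 0 1 * hr)
    · simp [detThreeRep]; omega

lemma eq_of_detThreeRep_mul_eq_mul {i j : Fin 4} {V A : M₂}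
    (hA : A = 1 ∨ A = -1) (h : detThreeRep i * V = A * detThreeRep j) : i = j ∧ V = A := by
  rw [eta_fin_two V] at h ⊢
  rcases hA with rfl | rfl <;> fin_cases i <;> fin_cases j <;>
    simp [detThreeRep, Matrix.one_fin_two] at h ⊢ <;> omega

lemma eq_swap_of_detThreeRep_mul_eq_mul {i j : Fin 4} {V A : M₂}
    (hA : A = !![0, -1; 1, 0] ∨ A = !![0, 1; -1, 0]) (h : detThreeRep i * V = A * detThreeRep j) :
    j = ![1, 0, 3, 2] i := by
  rw [eta_fin_two V] at h
  rcases hA with rfl | rfl <;> fin_cases i <;> fin_cases j <;>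
    simp [detThreeRep] at h ⊢ <;> omega

lemma IsPosDef.subst_detThreeRep {G : BinaryQF} (hG : G.IsPosDef) (i : Fin 4) :
    (G.subst (detThreeRep i)).IsPosDef :=
  hG.subst (by rw [det_detThreeRep]; norm_num)

section

variable {G : BinaryQF} (hG : G.disc % 3 = 2) (hGr : G.IsReduced) (hGp : G.IsPosDef)
include hG

lemma not_b_eq_a_and_c_eq_a : ¬(G.b = G.a ∧ G.c = G.a) := by
  rintro ⟨hb, hc⟩
  rw [disc, hb, hc, show G.a ^ 2 - 4 * G.a * G.a = 3 * (-G.a ^ 2) by ring] at hG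
  omega

include hGr hGp

lemma eq_of_subst_detThreeRep_equivalent {i j : Fin 4} {V : M₂} (hV : V.det = 1)
    (h : (G.subst (detThreeRep i)).subst V = G.subst (detThreeRep j)) :
    (i = j ∧ (V = 1 ∨ V = -1)) ∨ (G.b = 0 ∧ G.c = G.a ∧ j = ![1, 0, 3, 2] i) := by
  obtain ⟨A, hA, hGA, hLV⟩ := exists_mul_eq_mul_of_subst_eq hG (det_detThreeRep i)
    (det_detThreeRep j) hV h
  rcases hGr.eq_of_subst_eq_self hGp.2 (not_b_eq_a_and_c_eq_a hG) hA hGA with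
    hA | hA | ⟨hb, hc, hA⟩
  · obtain ⟨hij, rfl⟩ := eq_of_detThreeRep_mul_eq_mul (.inl hA) hLV
    exact .inl ⟨hij, .inl hA⟩
  · obtain ⟨hij, rfl⟩ := eq_of_detThreeRep_mul_eq_mul (.inr hA) hLV
    exact .inl ⟨hij, .inr hA⟩
  · exact .inr ⟨hb, hc, eq_swap_of_detThreeRep_mul_eq_mul hA hLV⟩

lemma hasTrivialAut_subst_detThreeRep (i : Fin 4) : (G.subst (detThreeRep i)).HasTrivialAut := by
  intro V hV h
  rcases eq_of_subst_detThreeRep_equivalent hG hGr hGp hV h with ⟨-, hV⟩ | ⟨-, -, hi⟩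
  · exact hV
  · fin_cases i <;> simp at hi

lemma eq_of_reduction_subst_detThreeRep_eq {i j : Fin 4}
    (h : (G.subst (detThreeRep i)).reduction = (G.subst (detThreeRep j)).reduction) :
    i = j ∨ (G.b = 0 ∧ G.c = G.a ∧ j = ![1, 0, 3, 2] i) := by
  obtain ⟨V, hV, hfV⟩ := ((hGp.subst_detThreeRep i).reduction_spec.2.trans
    (h ▸ (hGp.subst_detThreeRep j).reduction_spec.2.symm))
  exact (eq_of_subst_detThreeRep_equivalent hG hGr hGp hV hfV).imp_left And.left

end

lemma IsPosDef.reduction_congr {f g : BinaryQF} (hf : f.IsPosDef) (h : f.Equivalent g) :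
    f.reduction = g.reduction :=
  (reduction_eq_of_equivalent hf.reduction_spec.1 (h.symm.trans hf.reduction_spec.2)).symm

open Classical in
/-- For a `3`-primitive form of discriminant `9D`, `D ≡ 2 (mod 3)`, the reduced form of
discriminant `D` below it (well defined by `IsPosDef.descent_eq_reduction`). -/
noncomputable def descent (t : BinaryQF) : BinaryQF :=
  if h : ∃ G : BinaryQF, ∃ L : M₂, L.det = 3 ∧ t.Equivalent (G.subst L) then h.choose.reduction
  else t

lemma IsPosDef.descent_eq_reduction {t G : BinaryQF} (ht : t.IsPosDef) (hG : G.disc % 3 = 2)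
    {L : M₂} (hL : L.det = 3) (h : t.Equivalent (G.subst L)) : t.descent = G.reduction := by
  have hex : ∃ G : BinaryQF, ∃ L : M₂, L.det = 3 ∧ t.Equivalent (G.subst L) := ⟨G, L, hL, h⟩
  rw [descent, dif_pos hex]
  obtain ⟨L₀, hL₀, h₀⟩ := hex.choose_spec
  obtain ⟨V, hV, hV'⟩ := h.symm.trans h₀
  obtain ⟨A, hA, hGA, -⟩ := exists_mul_eq_mul_of_subst_eq hG hL hL₀ hV hV'
  have hGp : G.IsPosDef := (h.isPosDef ht).of_subst (by rw [hL]; norm_num)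
  exact (hGp.reduction_congr ⟨A, hA, hGA⟩).symm

lemma IsPosDef.exists_descent_eq_reduction {t : BinaryQF} (ht : t.IsPosDef)
    (htp : t.IsPrimitiveAt 3) {D : ℤ} (hD : D % 3 = 2) (htD : t.disc = 9 * D) :
    ∃ G : BinaryQF, G.IsPosDef ∧ G.disc = D ∧ t.descent = G.reduction ∧
      t.Equivalent (G.subst !![3, 0; 0, 1]) := by
  obtain ⟨G, hG⟩ := htp.exists_equivalent_subst ⟨D, htD⟩
  have hGD : G.disc = D := by
    have := hG.disc_eq
    rw [disc_subst, htD] at this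
    norm_num [det_fin_two] at this
    linarith
  have hL : (!![3, 0; 0, 1] : M₂).det = 3 := by norm_num [det_fin_two]
  exact ⟨G, (hG.isPosDef ht).of_subst (by rw [hL]; norm_num), hGD,
    ht.descent_eq_reduction (hGD ▸ hD) hL hG, hG⟩

lemma descent_eq_iff {G t : BinaryQF} (hG : G.disc % 3 = 2) (hGr : G.IsReduced)
    (hGp : G.IsPosDef) (htr : t.IsReduced) (htp : t.IsPosDef) (ht3 : t.IsPrimitiveAt 3)
    (htG : t.disc = 9 * G.disc) :
    t.descent = G ↔ ∃ i, (G.subst (detThreeRep i)).reduction = t := by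
  constructor
  · intro hdesc
    obtain ⟨G₁, hG₁p, -, hG₁, htG₁⟩ := htp.exists_descent_eq_reduction ht3 hG htG
    have hG₁G : G₁.Equivalent G := hG₁.symm.trans hdesc ▸ hG₁p.reduction_spec.2
    obtain ⟨U, hU, rfl⟩ := hG₁G.symm
    rw [← subst_mul] at htG₁
    obtain ⟨i, V, hV, hUL⟩ := exists_eq_detThreeRep_mul (W := U * !![3, 0; 0, 1])
      (by rw [det_mul, hU]; norm_num [det_fin_two])
    rw [hUL, subst_mul] at htG₁
    exact ⟨i, reduction_eq_of_equivalent htr (Equivalent.trans ⟨V, hV, rfl⟩ htG₁.symm)⟩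
  · rintro ⟨i, rfl⟩
    rw [htp.descent_eq_reduction hG (det_detThreeRep i)
      (hGp.subst_detThreeRep i).reduction_spec.2.symm]
    exact reduction_eq_of_equivalent hGr (.refl G)

lemma IsReduced.le_of_disc_eq {f : BinaryQF} {N : ℕ} (hf : f.IsReduced) (ha : 0 < f.a)
    (hd : f.disc = -N) : f.a ≤ N ∧ |f.b| ≤ N ∧ f.c ≤ N := by
  obtain ⟨hba, hac, -⟩ := hf
  have hb2 : f.b ^ 2 ≤ f.a ^ 2 := by rw [← sq_abs]; exact pow_le_pow_left₀ (abs_nonneg _) hba 2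
  have hc : f.c ≤ N := by simp only [disc] at hd; nlinarith
  exact ⟨hac.trans hc, hba.trans (hac.trans hc), hc⟩

lemma finite_setOf_isReduced (N : ℕ) :
    {f : BinaryQF | f.disc = -N ∧ 0 < f.a ∧ f.IsReduced}.Finite := by
  refine (((Set.finite_Icc (1 : ℤ) N).prod ((Set.finite_Icc (-N : ℤ) N).prod
    (Set.finite_Icc (1 : ℤ) N))).image fun t => (⟨t.1, t.2.1, t.2.2⟩ : BinaryQF)).subset ?_
  rintro f ⟨hd, ha, hf⟩
  obtain ⟨haN, hbN, hcN⟩ := hf.le_of_disc_eq ha hd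
  exact ⟨(f.a, f.b, f.c), ⟨⟨ha, haN⟩, abs_le.1 hbN, ⟨by linarith [hf.2.1], hcN⟩⟩, rfl⟩

noncomputable def reducedForms (N : ℕ) : Finset BinaryQF := (finite_setOf_isReduced N).toFinset

lemma mem_reducedForms {N : ℕ} {f : BinaryQF} :
    f ∈ reducedForms N ↔ f.disc = -N ∧ 0 < f.a ∧ f.IsReduced :=
  Set.Finite.mem_toFinset _

lemma isReduced_smul_iff {k : ℤ} (hk : 0 < k) {f : BinaryQF} : (k • f).IsReduced ↔ f.IsReduced := by
  simp only [IsReduced, smul_a, smul_b, smul_c, abs_mul, abs_of_pos hk, mul_le_mul_iff_right₀ hk,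
    mul_right_inj' hk.ne', mul_nonneg_iff_of_pos_left hk]

lemma weight_smul {k : ℤ} (hk : k ≠ 0) (f : BinaryQF) : (k • f).weight = f.weight := by
  simp only [weight, smul_a, smul_b, smul_c, mul_right_inj' hk, mul_eq_zero, hk, false_or]

open Classical in
lemma sum_weight_filter_not_isPrimitiveAt (M : ℕ) :
    ∑ t ∈ (reducedForms (9 * M)).filter (fun t => ¬t.IsPrimitiveAt 3), t.weight =
      ∑ f ∈ reducedForms M, f.weight := by
  have himage : (reducedForms (9 * M)).filter (fun t => ¬t.IsPrimitiveAt 3) =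
      (reducedForms M).image ((3 : ℤ) • ·) := by
    ext t
    simp only [Finset.mem_filter, Finset.mem_image, mem_reducedForms, IsPrimitiveAt, not_not]
    constructor
    · rintro ⟨⟨hd, ha, hr⟩, g, rfl⟩
      rw [disc_smul] at hd
      exact ⟨g, ⟨by push_cast at hd; linarith, by simpa using ha,
        (isReduced_smul_iff three_pos).1 hr⟩, rfl⟩
    · rintro ⟨g, ⟨hd, ha, hr⟩, rfl⟩
      exact ⟨⟨by rw [disc_smul, hd]; push_cast; ring, by simpa using ha,
        (isReduced_smul_iff three_pos).2 hr⟩, g, rfl⟩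
  rw [himage, Finset.sum_image fun f _ g _ h => smul_right_injective three_ne_zero h]
  exact Finset.sum_congr rfl fun f _ => weight_smul three_ne_zero f

lemma descent_mem_reducedForms {M : ℕ} (hM : M % 3 = 1) {t : BinaryQF}
    (ht : t ∈ reducedForms (9 * M)) (htp : t.IsPrimitiveAt 3) : t.descent ∈ reducedForms M := by
  obtain ⟨htd, hta, -⟩ := mem_reducedForms.1 ht
  obtain ⟨G, hGp, hGd, hdesc, -⟩ := IsPosDef.exists_descent_eq_reduction (D := -M)
    ⟨by rw [htd]; omega, hta⟩ htp (by omega) (by rw [htd]; push_cast; ring)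
  obtain ⟨hr, he⟩ := hGp.reduction_spec
  rw [hdesc, mem_reducedForms]
  exact ⟨by rw [he.disc_eq, hGd], (he.isPosDef hGp).2, hr⟩

section

variable {G : BinaryQF} (hG : G.disc % 3 = 2) (hGr : G.IsReduced) (hGp : G.IsPosDef)
include hG hGr hGp

lemma weight_reduction_subst_detThreeRep (i : Fin 4) :
    (G.subst (detThreeRep i)).reduction.weight = 1 :=
  ((hasTrivialAut_subst_detThreeRep hG hGr hGp i).of_equivalent
    (hGp.subst_detThreeRep i).reduction_spec.2).weight_eq_one

lemma card_image_reduction_subst_detThreeRep :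
    ((Finset.univ.image fun i => (G.subst (detThreeRep i)).reduction).card : ℚ) =
      4 * G.weight := by
  by_cases hS : G.b = 0 ∧ G.c = G.a
  · obtain ⟨hb, hc⟩ := hS
    have h₁₀ : (G.subst (detThreeRep 1)).reduction = (G.subst (detThreeRep 0)).reduction :=
      (hGp.subst_detThreeRep 1).reduction_congr
        ⟨!![0, -1; 1, 0], by simp [det_fin_two], by ext <;> simp [detThreeRep, eval, hb, hc]⟩
    have h₃₂ : (G.subst (detThreeRep 3)).reduction = (G.subst (detThreeRep 2)).reduction :=
      (hGp.subst_detThreeRep 3).reduction_congr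
        ⟨!![-1, -3; 1, 2], by simp [det_fin_two], by ext <;> simp [detThreeRep, eval, hb, hc] <;> ring⟩
    have h₀₂ : (G.subst (detThreeRep 0)).reduction ≠ (G.subst (detThreeRep 2)).reduction :=
      fun h => by simpa using eq_of_reduction_subst_detThreeRep_eq hG hGr hGp h
    have himage : (Finset.univ.image fun i => (G.subst (detThreeRep i)).reduction) =
        {(G.subst (detThreeRep 0)).reduction, (G.subst (detThreeRep 2)).reduction} := by
      ext t
      simp only [Finset.mem_image, Finset.mem_univ, true_and, Finset.mem_insert,
        Finset.mem_singleton]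
      constructor
      · rintro ⟨i, rfl⟩
        fin_cases i <;> simp [h₁₀, h₃₂]
      · rintro (rfl | rfl)
        exacts [⟨0, rfl⟩, ⟨2, rfl⟩]
    rw [himage, Finset.card_pair h₀₂, weight, if_neg, if_pos ⟨hb, hc.symm⟩]
    · norm_num
    · exact fun h => not_b_eq_a_and_c_eq_a hG ⟨h.1, h.2.symm⟩
  · rw [Finset.card_image_of_injective _ fun i j h =>
      (eq_of_reduction_subst_detThreeRep_eq hG hGr hGp h).resolve_right fun h' => hS ⟨h'.1, h'.2.1⟩,
      weight, if_neg, if_neg]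
    · norm_num
    · exact fun h => hS ⟨h.1, h.2.symm⟩
    · exact fun h => not_b_eq_a_and_c_eq_a hG ⟨h.1, h.2.symm⟩

end

open Classical in
lemma filter_descent_eq_image {M : ℕ} (hM : M % 3 = 1) {G : BinaryQF} (hG : G ∈ reducedForms M) :
    (reducedForms (9 * M)).filter (fun t => t.IsPrimitiveAt 3 ∧ t.descent = G) =
      Finset.univ.image fun i => (G.subst (detThreeRep i)).reduction := by
  obtain ⟨hGd, hGa, hGr⟩ := mem_reducedForms.1 hG
  have hG3 : G.disc % 3 = 2 := by rw [hGd]; omega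
  have hGp : G.IsPosDef := ⟨by rw [hGd]; omega, hGa⟩
  ext t
  simp only [Finset.mem_filter, Finset.mem_image, Finset.mem_univ, true_and, mem_reducedForms]
  constructor
  · rintro ⟨⟨htd, hta, htr⟩, htp, hdesc⟩
    exact (descent_eq_iff hG3 hGr hGp htr ⟨by rw [htd]; omega, hta⟩ htp
      (by rw [htd, hGd]; push_cast; ring)).1 hdesc
  · rintro ⟨i, rfl⟩
    obtain ⟨hr, he⟩ := (hGp.subst_detThreeRep i).reduction_spec
    have hp := he.isPosDef (hGp.subst_detThreeRep i)
    have h3 := he.isPrimitiveAt (isPrimitiveAt_subst hG3 (det_detThreeRep i))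
    have hd : (G.subst (detThreeRep i)).reduction.disc = 9 * G.disc := by
      rw [he.disc_eq, disc_subst, det_detThreeRep]; ring
    exact ⟨⟨by rw [hd, hGd]; push_cast; ring, hp.2, hr⟩, h3,
      (descent_eq_iff hG3 hGr hGp hr hp h3 hd).2 ⟨i, rfl⟩⟩

open Classical in
lemma sum_weight_filter_descent_eq {M : ℕ} (hM : M % 3 = 1) {G : BinaryQF}
    (hG : G ∈ reducedForms M) :
    ∑ t ∈ (reducedForms (9 * M)).filter (fun t => t.IsPrimitiveAt 3 ∧ t.descent = G), t.weight =
      4 * G.weight := by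
  obtain ⟨hGd, hGa, hGr⟩ := mem_reducedForms.1 hG
  have hG3 : G.disc % 3 = 2 := by rw [hGd]; omega
  have hGp : G.IsPosDef := ⟨by rw [hGd]; omega, hGa⟩
  rw [filter_descent_eq_image hM hG, Finset.sum_congr rfl (g := fun _ => (1 : ℚ)),
    Finset.sum_const, nsmul_one, card_image_reduction_subst_detThreeRep hG3 hGr hGp]
  intro t ht
  obtain ⟨i, -, rfl⟩ := Finset.mem_image.1 ht
  exact weight_reduction_subst_detThreeRep hG3 hGr hGp i

lemma exists_int_eq_six_mul_weight (f : BinaryQF) : ∃ z : ℤ, 6 * f.weight = z := by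
  unfold weight
  split_ifs
  exacts [⟨2, by norm_num⟩, ⟨3, by norm_num⟩, ⟨6, by norm_num⟩]

end BinaryQF

open BinaryQF

lemma hurwitzClassNumber_eq_sum_weight {N : ℕ} (hN : 0 < N) :
    hurwitzClassNumber N = ∑ f ∈ reducedForms N, f.weight := by
  rw [hurwitzClassNumber, if_neg hN.ne']
  refine Finset.sum_nbij' (fun t => ⟨t.1, t.2.1, t.2.2⟩) (fun f => (f.a.toNat, f.b, f.c.toNat))
    ?_ ?_ ?_ ?_ ?_
  · rintro ⟨a, b, c⟩ ht
    simp only [Finset.mem_filter, Finset.mem_product, Finset.mem_Icc] at ht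
    simp only [mem_reducedForms, BinaryQF.disc, BinaryQF.IsReduced]
    omega
  · rintro f hf
    simp only [mem_reducedForms] at hf
    obtain ⟨hd, ha, hf⟩ := hf
    obtain ⟨haN, hbN, hcN⟩ := hf.le_of_disc_eq ha hd
    obtain ⟨hba, hac, hb0⟩ := hf
    have := abs_le.1 hbN
    simp only [BinaryQF.disc] at hd
    simp only [Finset.mem_filter, Finset.mem_product, Finset.mem_Icc,
      Int.toNat_of_nonneg ha.le, Int.toNat_of_nonneg (ha.trans_le hac).le]
    omega
  · rintro ⟨a, b, c⟩ -
    simp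
  · rintro f hf
    simp only [mem_reducedForms] at hf
    ext <;> simp <;> linarith [hf.2.1, hf.2.2.2.1]
  · rintro ⟨a, b, c⟩ -
    simp [weight]


open Classical in
theorem hurwitzClassNumber_nine_mul {M : ℕ} (hM : M % 3 = 1) :
    hurwitzClassNumber (9 * M) = 5 * hurwitzClassNumber M := by
  rw [hurwitzClassNumber_eq_sum_weight (by omega), hurwitzClassNumber_eq_sum_weight (by omega),
    ← Finset.sum_filter_add_sum_filter_not _ (fun t => t.IsPrimitiveAt 3),
    sum_weight_filter_not_isPrimitiveAt,
    ← Finset.sum_fiberwise_of_maps_to (g := descent) (t := reducedForms M)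
      fun t ht => descent_mem_reducedForms hM (Finset.mem_filter.1 ht).1 (Finset.mem_filter.1 ht).2]
  simp only [Finset.filter_filter]
  rw [Finset.sum_congr rfl fun G hG => sum_weight_filter_descent_eq hM hG, ← Finset.mul_sum]
  ring

lemma den_hurwitzClassNumber_dvd {N : ℕ} (hN : 0 < N) : (hurwitzClassNumber N).den ∣ 6 := by
  obtain ⟨z, hz⟩ : ∃ z : ℤ, 6 * hurwitzClassNumber N = z := by
    choose w hw using exists_int_eq_six_mul_weight
    refine ⟨∑ f ∈ reducedForms N, w f, ?_⟩
    rw [hurwitzClassNumber_eq_sum_weight hN, Finset.mul_sum]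
    push_cast
    exact Finset.sum_congr rfl fun f _ => hw f
  rw [show hurwitzClassNumber N = Rat.divInt z 6 by rw [Rat.divInt_eq_div, ← hz]; push_cast; ring]
  exact_mod_cast Rat.den_dvd z 6

/-- For every integer n ≥ 0, H(3 ^ 3·n + 3 ^ 2) ≡ 0 (mod 5). -/
theorem hurwitz_congruence_stmt1 :
    ∀ n : ℕ, RatModZero 5 (hurwitzClassNumber (3 ^ 3 * n + 3 ^ 2)) := by
  intro n
  have hM : (3 * n + 1) % 3 = 1 := by omega
  refine ⟨hurwitzClassNumber (3 * n + 1), ?_, fun h5 => ?_⟩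
  · rw [show 3 ^ 3 * n + 3 ^ 2 = 9 * (3 * n + 1) by ring, hurwitzClassNumber_nine_mul hM]
    norm_num
  · have := h5.trans (den_hurwitzClassNumber_dvd (by omega : 0 < 3 * n + 1))
    norm_num at this
end

section
/- Let C, m, d be positive integers and α, x, y integers with C | m, gcd(αC, m/C) = 1, d | (m/C), and αCx + (m/C)y = 1. Then the set of residues u modulo m with gcd(m, 1 + αCu) = d equals the set of residues of the form −x + sd + (m/C)r modulo m, where s ranges over 0 ≤ s < m/(Cd) with gcd(s, m/(Cd)) = 1 and r ranges over 0 ≤ r < C. -/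
/-!
Write `m = C N` and `N = d k`. Since `1 + αCu` is prime to `C`, and modulo `N` it equals
`αC (u + x)` with `αC` a unit, `gcd(m, 1 + αCu) = gcd(N, u + x)`. So the condition says that
`w = u + x` is `d t` with `t` prime to `k`, and the residues of such `w` modulo `m = C d k` are
the `d (s + k r)` with `0 ≤ s < k` prime to `k` and `0 ≤ r < C`.
-/

theorem Int.gcd_mul_left_of_isCoprime {a c : ℤ} (h : IsCoprime a c) (b : ℤ) :
    Int.gcd (a * b) c = Int.gcd b c := by
  simpa only [Int.gcd, Int.natAbs_mul] using
    Nat.Coprime.gcd_mul_left_cancel b.natAbs (Int.isCoprime_iff_gcd_eq_one.mp h)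

theorem Int.gcd_natCast_mul_mul_eq_self_iff {d : ℕ} (hd : d ≠ 0) (k t : ℤ) :
    Int.gcd (d * k) (d * t) = d ↔ Int.gcd k t = 1 := by
  rw [Int.gcd_mul_left, Int.natAbs_natCast]
  exact Nat.mul_eq_left hd

theorem Int.gcd_mul_one_add_mul_eq_gcd_add {α C N x y : ℤ} (hbez : α * C * x + N * y = 1)
    (u : ℤ) : Int.gcd (C * N) (1 + α * C * u) = Int.gcd N (u + x) := by
  have hC : IsCoprime C (1 + α * C * u) := ⟨-(α * u), 1, by ring⟩
  have hαC : IsCoprime (α * C) N := ⟨x, y, by linear_combination hbez⟩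
  calc Int.gcd (C * N) (1 + α * C * u)
      = Int.gcd N (α * C * (u + x) + N * y) := by
        rw [Int.gcd_mul_left_of_isCoprime hC]
        congr 1
        linear_combination -hbez
    _ = Int.gcd N (u + x) := by
        rw [Int.gcd_add_mul_left_right, Int.gcd_comm, Int.gcd_mul_left_of_isCoprime hαC,
          Int.gcd_comm]

theorem Int.gcd_natCast_mul_add_mul_eq_self {d : ℕ} (hd : d ≠ 0) {k s : ℤ}
    (hs : Int.gcd s k = 1) (r : ℤ) : Int.gcd (d * k) (s * d + d * k * r) = d := by
  rw [show s * d + d * k * r = d * (s + k * r) by ring,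
    Int.gcd_natCast_mul_mul_eq_self_iff hd, Int.gcd_add_mul_left_right, Int.gcd_comm, hs]

theorem Int.exists_modEq_of_gcd_natCast_mul_eq_self {C d k : ℕ} (hC : 0 < C) (hk : 0 < k)
    (hd : d ≠ 0) {w : ℤ} (hw : Int.gcd (d * k) w = d) :
    ∃ s r : ℤ, 0 ≤ s ∧ s < k ∧ Int.gcd s k = 1 ∧ 0 ≤ r ∧ r < C ∧
      w ≡ s * d + d * k * r [ZMOD C * (d * k)] := by
  obtain ⟨t, rfl⟩ : (d : ℤ) ∣ w := hw ▸ Int.gcd_dvd_right _ _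
  have ht : Int.gcd k t = 1 := (Int.gcd_natCast_mul_mul_eq_self_iff hd k t).mp hw
  have hkZ : (0 : ℤ) < k := by exact_mod_cast hk
  have hCZ : (0 : ℤ) < C := by exact_mod_cast hC
  refine ⟨t % k, t / k % C, Int.emod_nonneg _ hkZ.ne', Int.emod_lt_of_pos _ hkZ,
    by rw [Int.gcd_emod, Int.gcd_comm, ht], Int.emod_nonneg _ hCZ.ne', Int.emod_lt_of_pos _ hCZ,
    ?_⟩
  have htmod : t ≡ t % k + k * (t / k % C) [ZMOD k * C] :=
    calc t = t % k + k * (t / k) := (Int.emod_add_mul_ediv t k).symm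
      _ ≡ t % k + k * (t / k % C) [ZMOD k * C] :=
        ((Int.mod_modEq _ _).symm.mul_left' (c := k)).add_left _
  convert htmod.mul_left' (c := d) using 1 <;> ring

theorem radu_residue_classes_general (C m d : ℕ) (hm : 0 < m)
    (α x y : ℤ) (hCm : C ∣ m)
    (hdm : d ∣ m / C) (hbez : α * C * x + ((m / C : ℕ) : ℤ) * y = 1) :
    {v : ZMod m | ∃ u : ℤ, (u : ZMod m) = v ∧ Int.gcd (m : ℤ) (1 + α * C * u) = d} =
      {v : ZMod m | ∃ s r : ℤ, 0 ≤ s ∧ s < ((m / (C * d) : ℕ) : ℤ) ∧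
        Int.gcd s ((m / (C * d) : ℕ) : ℤ) = 1 ∧ 0 ≤ r ∧ r < (C : ℤ) ∧
        v = ((-x + s * d + ((m / C : ℕ) : ℤ) * r : ℤ) : ZMod m)} := by
  obtain ⟨N, rfl⟩ := hCm
  have hC : 0 < C := Nat.pos_of_mul_pos_right hm
  rw [Nat.mul_div_cancel_left N hC] at hdm hbez ⊢
  obtain ⟨k, rfl⟩ := hdm
  have hd : d ≠ 0 := (Nat.pos_of_mul_pos_right (Nat.pos_of_mul_pos_left hm)).ne'
  have hk : 0 < k := Nat.pos_of_mul_pos_left (Nat.pos_of_mul_pos_left hm)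
  rw [Nat.mul_div_mul_left _ _ hC, Nat.mul_div_cancel_left k (Nat.pos_of_ne_zero hd)]
  push_cast at hbez
  ext v
  simp only [Set.mem_ofPred_eq, Nat.cast_mul, Int.gcd_mul_one_add_mul_eq_gcd_add hbez]
  constructor
  · rintro ⟨u, rfl, hu⟩
    obtain ⟨s, r, hs0, hsk, hs, hr0, hrC, hmod⟩ :=
      Int.exists_modEq_of_gcd_natCast_mul_eq_self hC hk hd hu
    refine ⟨s, r, hs0, hsk, hs, hr0, hrC, (ZMod.intCast_eq_intCast_iff _ _ _).mpr ?_⟩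
    convert hmod.add_right (-x) using 1 <;> push_cast <;> ring
  · rintro ⟨s, r, -, -, hs, -, -, rfl⟩
    refine ⟨_, rfl, ?_⟩
    convert Int.gcd_natCast_mul_add_mul_eq_self hd hs r using 2
    ring

/-- residue class lemma à la Radu: with `C ∣ m`, `gcd(αC, m/C) = 1`,
`d ∣ m/C` and `αCx + (m/C)y = 1`, the residues `u mod m` with `gcd(m, 1 + αCu) = d`
are exactly those of the form `-x + s d + (m/C) r` with `0 ≤ s < m/(Cd)`,
`gcd(s, m/(Cd)) = 1` and `0 ≤ r < C`. -/
theorem radu_residue_classes (C m d : ℕ) (hC : 0 < C) (hm : 0 < m) (hd : 0 < d)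
    (α x y : ℤ) (hCm : C ∣ m) (hcop : Int.gcd (α * C) ((m / C : ℕ) : ℤ) = 1)
    (hdm : d ∣ m / C) (hbez : α * C * x + ((m / C : ℕ) : ℤ) * y = 1) :
    {v : ZMod m | ∃ u : ℤ, (u : ZMod m) = v ∧ Int.gcd (m : ℤ) (1 + α * C * u) = d} =
      {v : ZMod m | ∃ s r : ℤ, 0 ≤ s ∧ s < ((m / (C * d) : ℕ) : ℤ) ∧
        Int.gcd s ((m / (C * d) : ℕ) : ℤ) = 1 ∧ 0 ≤ r ∧ r < (C : ℤ) ∧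
        v = ((-x + s * d + ((m / C : ℕ) : ℤ) * r : ℤ) : ZMod m)} :=
  radu_residue_classes_general C m d hm α x y hCm hdm hbez
end

section
/- For every even k ≥ 2 and every integer n ≥ 1, the quantity (2k/B_k)·σ_{k−1}(n) is 3-integral, and for k ∈ {2,4,6} it is divisible by 3. -/
/-!
By von Staudt–Clausen, `B_k + ∑_{q prime, q - 1 ∣ k} 1/q` is an integer for even `k > 0`; multiplying
by a prime `p` with `p - 1 ∣ k` shows `p B_k ≡ -1 (mod p)`, every other term being divisible by `p`.
So `p B_k` is a `p`-adic unit, and `a / B_k = p · a / (p B_k)` is divisible by `p` for every integer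
`a`; take `p = 3` and `a = 2k σ_{k-1}(n)`.
-/

open Finset

lemma RatModZero.not_dvd_den {ℓ : ℕ} {x : ℚ} (h : RatModZero ℓ x) : ¬ ℓ ∣ x.den := by
  obtain ⟨y, rfl, hy⟩ := h
  refine fun hx => hy (hx.trans ?_)
  simpa using Rat.mul_den_dvd (ℓ : ℚ) y

namespace Rat

variable {p : ℕ} [Fact p.Prime]

lemma padicValuation_intCast_le_one (a : ℤ) : Rat.padicValuation p a ≤ 1 :=
  Int.padicValuation_le_one p a

lemma padicValuation_natCast_eq_one {q : ℕ} (h : ¬ p ∣ q) : Rat.padicValuation p q = 1 := by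
  rw [← Int.cast_natCast, padicValuation_cast, Int.padicValuation_eq_one_iff]
  exact_mod_cast h

lemma padicValuation_self_lt_one : Rat.padicValuation p p < 1 := by
  rw [← Int.cast_natCast, padicValuation_cast, Int.padicValuation_lt_one_iff]

end Rat

theorem padicValuation_prime_mul_bernoulli_eq_one {p k : ℕ} [hp : Fact p.Prime] (hk : Even k)
    (hk0 : k ≠ 0) (hpk : p - 1 ∣ k) : Rat.padicValuation p (p * bernoulli k) = 1 := by
  obtain ⟨m, rfl⟩ := hk
  rw [← two_mul] at hk0 hpk ⊢
  obtain ⟨T, hT⟩ := Bernoulli.vonStaudt_clausen m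
  set S := (range (2 * m + 2)).filter fun q ↦ q.Prime ∧ (q - 1) ∣ 2 * m
  have hpS : p ∈ S := by
    have := Nat.le_of_dvd (by omega) hpk
    simp only [S, mem_filter, mem_range]
    exact ⟨by omega, hp.out, hpk⟩
  rw [← add_sum_erase S _ hpS] at hT
  have hsplit : (p : ℚ) * bernoulli (2 * m) = (p * T - ∑ q ∈ S.erase p, (p : ℚ) / q) - 1 := by
    have hp0 : (p : ℚ) ≠ 0 := by exact_mod_cast hp.out.ne_zero
    simp only [div_eq_mul_one_div (p : ℚ)]
    rw [← mul_sum, hT]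
    field_simp
    ring
  have hsmall : Rat.padicValuation p (p * T - ∑ q ∈ S.erase p, (p : ℚ) / q) < 1 := by
    refine Valuation.map_sub_lt _ ?_ (Valuation.map_sum_lt _ one_ne_zero fun q hq => ?_)
    · rw [map_mul]
      exact mul_lt_one_of_lt_of_le Rat.padicValuation_self_lt_one
        (Rat.padicValuation_intCast_le_one T)
    · obtain ⟨hqp, hqS⟩ := mem_erase.mp hq
      have hpq : ¬ p ∣ q := fun h =>
        hqp ((Nat.prime_dvd_prime_iff_eq hp.out (mem_filter.mp hqS).2.1).mp h).symm
      rw [map_div₀, Rat.padicValuation_natCast_eq_one hpq, div_one]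
      exact Rat.padicValuation_self_lt_one
  rw [hsplit, Valuation.map_sub_eq_of_lt_right _ (by rwa [map_one]), map_one]

theorem ratModZero_intCast_div_bernoulli {p k : ℕ} [hp : Fact p.Prime] (hk : Even k)
    (hk0 : k ≠ 0) (hpk : p - 1 ∣ k) (a : ℤ) : RatModZero p (a / bernoulli k) := by
  have hp0 : (p : ℚ) ≠ 0 := by exact_mod_cast hp.out.ne_zero
  refine ⟨a * (p * bernoulli k)⁻¹, ?_, ?_⟩
  · rw [mul_inv, mul_left_comm, mul_inv_cancel_left₀ hp0, div_eq_mul_inv]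
  · rw [← Rat.padicValuation_le_one_iff, map_mul, map_inv₀,
      padicValuation_prime_mul_bernoulli_eq_one hk hk0 hpk, inv_one, mul_one]
    exact Rat.padicValuation_intCast_le_one a

theorem eisenstein_coefficient_three_integral_general (k n : ℕ) (hk : Even k) (hk2 : 2 ≤ k) :
    ¬ (3 ∣ ((2 * k / bernoulli k) * ∑ d ∈ n.divisors, (d : ℚ) ^ (k - 1)).den) ∧
    (k = 2 ∨ k = 4 ∨ k = 6 →
      RatModZero 3 ((2 * k / bernoulli k) * ∑ d ∈ n.divisors, (d : ℚ) ^ (k - 1))) := by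
  have h : RatModZero 3 ((2 * k / bernoulli k) * ∑ d ∈ n.divisors, (d : ℚ) ^ (k - 1)) := by
    have hσ : (2 * k / bernoulli k) * ∑ d ∈ n.divisors, (d : ℚ) ^ (k - 1)
        = ((2 * k * ∑ d ∈ n.divisors, d ^ (k - 1) : ℕ) : ℤ) / bernoulli k := by
      push_cast
      ring
    rw [hσ]
    exact ratModZero_intCast_div_bernoulli (p := 3) hk (by omega) hk.two_dvd _
  exact ⟨h.not_dvd_den, fun _ => h⟩

/-- for every even `k ≥ 2` and every `n ≥ 1`, the quantity
`(2k / B_k) · σ_{k-1}(n)` is 3-integral, and for `k ∈ {2, 4, 6}` it is divisible by 3. -/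
theorem eisenstein_coefficient_three_integral (k n : ℕ) (hk : Even k) (hk2 : 2 ≤ k)
    (hn : 1 ≤ n) :
    ¬ (3 ∣ ((2 * k / bernoulli k) * ∑ d ∈ n.divisors, (d : ℚ) ^ (k - 1)).den) ∧
    (k = 2 ∨ k = 4 ∨ k = 6 →
      RatModZero 3 ((2 * k / bernoulli k) * ∑ d ∈ n.divisors, (d : ℚ) ^ (k - 1))) :=
  eisenstein_coefficient_three_integral_general k n hk hk2
end

section
/- Let a, p, b be as follows: a a positive integer, p a prime with a_p exactly dividing b (where a_p is the p-part of a), m a non-negative integer, and u an integer with p ∤ u and u p^m ≡ 1 (mod a_p^#), where a_p^# = a / a_p. Then b u p^m (Z/(a p^{m+1})Z)^{×2} ⊆ b (Z/aZ)^{×2}. -/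
/-!
A unit `v` modulo `a p^(m+1)` is still a unit modulo `a`, and reducing modulo `a` turns the
multiplier `b u p^m` into `b`: the factor `u p^m` is `1` modulo `a_p^#`, while modulo `a_p`
both sides vanish because `a_p ∣ b`.
-/

/-- The square class `b (ℤ/aℤ)^{×2}`: integers `n` with `n ≡ b u² (mod a)` for some `u`
coprime to `a`. -/
def squareClass (a b : ℤ) : Set ℤ :=
  {n : ℤ | ∃ u : ℤ, IsCoprime u a ∧ n ≡ b * u ^ 2 [ZMOD a]}

theorem squareClass_subset_of_dvd {a a' : ℤ} (b : ℤ) (h : a ∣ a') :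
    squareClass a' b ⊆ squareClass a b := by
  rintro n ⟨v, hv, hn⟩
  exact ⟨v, hv.of_isCoprime_of_dvd_right h, hn.of_dvd h⟩

theorem squareClass_congr {a b b' : ℤ} (h : b ≡ b' [ZMOD a]) :
    squareClass a b = squareClass a b' := by
  ext n
  refine exists_congr fun v => and_congr_right fun _ => ?_
  exact ⟨fun hn => hn.trans (h.mul_right _), fun hn => hn.trans (h.mul_right _).symm⟩

theorem Int.ModEq.mul_left_of_dvd {d b c A : ℤ} (hb : d ∣ b) (hc : c ≡ 1 [ZMOD A]) :
    b * c ≡ b [ZMOD d * A] := by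
  obtain ⟨b', rfl⟩ := hb
  simpa [mul_right_comm d b'] using (hc.mul_left' (c := d)).mul_right b'

theorem squareClass_inclusion_general (p : ℕ) (e : ℕ) (A : ℤ) (b : ℤ) (hb : (p : ℤ) ^ e ∣ b)
    (m : ℕ) (u : ℤ) (huc : u * (p : ℤ) ^ m ≡ 1 [ZMOD A]) :
    squareClass (((p : ℤ) ^ e * A) * (p : ℤ) ^ (m + 1)) (b * u * (p : ℤ) ^ m) ⊆
      squareClass ((p : ℤ) ^ e * A) b := by
  have hmult : b * u * (p : ℤ) ^ m ≡ b [ZMOD (p : ℤ) ^ e * A] := by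
    rw [mul_assoc]
    exact Int.ModEq.mul_left_of_dvd hb huc
  rw [← squareClass_congr hmult]
  exact squareClass_subset_of_dvd _ (dvd_mul_right _ _)

/-- write `a = p^e · A` with `p ∤ A` (so `a_p = p^e`, `a_p^# = A`), and assume
`a_p` exactly divides `b`. For `m ≥ 0` and `u` with `p ∤ u` and `u p^m ≡ 1 (mod A)`,
one has `b u p^m (ℤ/(a p^(m+1))ℤ)^{×2} ⊆ b (ℤ/aℤ)^{×2}`. -/
theorem squareClass_inclusion (p : ℕ) (hp : p.Prime) (e : ℕ) (A : ℤ) (hA0 : 0 < A)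
    (hA : ¬ (p : ℤ) ∣ A) (b : ℤ) (hb : (p : ℤ) ^ e ∣ b) (hb' : ¬ (p : ℤ) ^ (e + 1) ∣ b)
    (m : ℕ) (u : ℤ) (hu : ¬ (p : ℤ) ∣ u) (huc : u * (p : ℤ) ^ m ≡ 1 [ZMOD A]) :
    squareClass (((p : ℤ) ^ e * A) * (p : ℤ) ^ (m + 1)) (b * u * (p : ℤ) ^ m) ⊆
      squareClass ((p : ℤ) ^ e * A) b :=
  squareClass_inclusion_general p e A b hb m u huc
end

section
/- For integers a, b and an odd prime p with p | a and p | b, the Kloosterman sum satisfies K(a, b, p^2) = p · K(a/p, b/p, p). -/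
open scoped Real

private lemma coprime_mod_iff (s p : ℕ) : Nat.Coprime (s % p) p ↔ Nat.Coprime s p := by
  unfold Nat.Coprime
  rw [Nat.gcd_comm (s % p) p, Nat.gcd_comm s p, Nat.gcd_rec p s, Nat.gcd_comm]

private lemma exp_congr (p : ℕ) (hp : p ≠ 0) (n m : ℤ) (h : ((n : ZMod p) = (m : ZMod p))) :
    Complex.exp (2 * π * Complex.I * ((n : ℂ) / (p : ℂ))) =
    Complex.exp (2 * π * Complex.I * ((m : ℂ) / (p : ℂ))) := by
  have hd : (p : ℤ) ∣ n - m := by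
    rw [← ZMod.intCast_zmod_eq_zero_iff_dvd]
    push_cast
    rw [h, sub_self]
  obtain ⟨k, hk⟩ := hd
  have hn : (n : ℂ) = (m : ℂ) + (p : ℂ) * (k : ℂ) := by
    have : n = m + p * k := by linarith [hk]
    exact_mod_cast congrArg (Int.cast : ℤ → ℂ) this
  have hp' : (p : ℂ) ≠ 0 := Nat.cast_ne_zero.mpr hp
  rw [hn]
  have : 2 * ↑π * Complex.I * (((m : ℂ) + (p : ℂ) * (k : ℂ)) / (p : ℂ)) =
      2 * ↑π * Complex.I * ((m : ℂ) / (p : ℂ)) + (k : ℂ) * (2 * ↑π * Complex.I) := by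
    field_simp
  rw [this, Complex.exp_add, Complex.exp_int_mul_two_pi_mul_I, mul_one]

/-- The Kloosterman sum `K(a, b, c) = Σ_{0 ≤ s < c, gcd(s,c)=1} e((a s + b s̄)/c)`,
where `s̄ s ≡ 1 (mod c)`. -/
noncomputable def kloostermanSum (a b : ℤ) (c : ℕ) : ℂ :=
  ∑ s ∈ (Finset.range c).filter (fun s => Nat.Coprime s c),
    Complex.exp (2 * π * Complex.I *
      (((a : ℂ) * (s : ℂ) + (b : ℂ) * ((((s : ZMod c)⁻¹ : ZMod c).val : ℕ) : ℂ)) / (c : ℂ)))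

/-- for an odd prime `p`, `K(p a, p b, p²) = p · K(a, b, p)`. -/
theorem kloosterman_prime_square_reduction (p : ℕ) (hp : p.Prime) (hodd : Odd p)
    (a b : ℤ) :
    kloostermanSum ((p : ℤ) * a) ((p : ℤ) * b) (p ^ 2) = (p : ℂ) * kloostermanSum a b p := by
  have hp0 : p ≠ 0 := hp.ne_zero
  have hppos : 0 < p := hp.pos
  have hpC : (p : ℂ) ≠ 0 := Nat.cast_ne_zero.mpr hp0
  haveI : NeZero p := ⟨hp0⟩
  haveI : Fact p.Prime := ⟨hp⟩
  haveI : NeZero (p ^ 2) := ⟨pow_ne_zero 2 hp0⟩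
  unfold kloostermanSum
  set f : ℕ → ℂ := fun s => Complex.exp (2 * π * Complex.I *
      (((a : ℂ) * (s : ℂ) + (b : ℂ) * ((((s : ZMod p)⁻¹ : ZMod p).val : ℕ) : ℂ)) / (p : ℂ)))
    with hf
  have key : ∑ s ∈ (Finset.range (p ^ 2)).filter (fun s => Nat.Coprime s (p ^ 2)),
      Complex.exp (2 * π * Complex.I *
        ((((p : ℤ) * a : ℤ) * (s : ℂ) + (((p : ℤ) * b : ℤ) : ℂ) *
          ((((s : ZMod (p ^ 2))⁻¹ : ZMod (p ^ 2)).val : ℕ) : ℂ)) / ((p ^ 2 : ℕ) : ℂ)))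
      = ∑ x ∈ ((Finset.range p).filter (fun s => Nat.Coprime s p)) ×ˢ Finset.range p,
          f x.1 := by
    refine Finset.sum_nbij' (fun s => (s % p, s / p)) (fun x => x.1 + p * x.2) ?_ ?_ ?_ ?_ ?_
    · intro s hs
      simp only [Finset.mem_filter, Finset.mem_range] at hs
      obtain ⟨hlt, hcop⟩ := hs
      have hcp : Nat.Coprime s p := (Nat.coprime_pow_right_iff two_pos s p).mp hcop
      simp only [Finset.mem_product, Finset.mem_filter, Finset.mem_range]
      refine ⟨⟨Nat.mod_lt s hppos, (coprime_mod_iff s p).mpr hcp⟩, ?_⟩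
      exact Nat.div_lt_of_lt_mul (by rwa [← sq])
    · intro x hx
      simp only [Finset.mem_product, Finset.mem_filter, Finset.mem_range] at hx
      obtain ⟨⟨h1, hc⟩, h2⟩ := hx
      simp only [Finset.mem_filter, Finset.mem_range]
      constructor
      · calc x.1 + p * x.2 < p + p * x.2 := Nat.add_lt_add_right h1 _
          _ = p * (x.2 + 1) := by ring
          _ ≤ p * p := Nat.mul_le_mul_left p h2
          _ = p ^ 2 := (sq p).symm
      · refine (Nat.coprime_pow_right_iff two_pos _ p).mpr ?_
        rw [← coprime_mod_iff, Nat.add_mul_mod_self_left, Nat.mod_eq_of_lt h1]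
        exact hc
    · intro s _
      simp [Nat.mod_add_div]
    · intro x hx
      simp only [Finset.mem_product, Finset.mem_filter, Finset.mem_range] at hx
      obtain ⟨⟨h1, _⟩, h2⟩ := hx
      have e1 : (x.1 + p * x.2) % p = x.1 := by
        rw [Nat.add_mul_mod_self_left, Nat.mod_eq_of_lt h1]
      have e2 : (x.1 + p * x.2) / p = x.2 := by
        rw [Nat.add_mul_div_left _ _ hppos, Nat.div_eq_of_lt h1, zero_add]
      simp [e1, e2]
    · intro s hs
      simp only [Finset.mem_filter, Finset.mem_range] at hs
      obtain ⟨hlt, hcop⟩ := hs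
      -- abbreviations
      set V2 : ℕ := ((s : ZMod (p ^ 2))⁻¹ : ZMod (p ^ 2)).val with hV2
      set V1 : ℕ := (((s % p : ℕ) : ZMod p)⁻¹ : ZMod p).val with hV1
      -- Step 1: rewrite LHS exponent: (p*a*s + p*b*V2)/p² = (a*s+b*V2)/p
      have hred : ((((p : ℤ) * a : ℤ) : ℂ) * (s : ℂ) + (((p : ℤ) * b : ℤ) : ℂ) * (V2 : ℂ))
          / ((p ^ 2 : ℕ) : ℂ)
          = (((a * (s : ℤ) + b * (V2 : ℤ) : ℤ)) : ℂ) / (p : ℂ) := by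
        push_cast
        field_simp
      have hmod : (((a * (s : ℤ) + b * (V2 : ℤ) : ℤ)) : ZMod p)
          = (((a * ((s % p : ℕ) : ℤ) + b * (V1 : ℤ) : ℤ)) : ZMod p) := by
        have hcp : Nat.Coprime s p := (Nat.coprime_pow_right_iff two_pos s p).mp hcop
        have hunit2 : ((s : ZMod (p ^ 2)) : ZMod (p ^ 2)) * ((s : ZMod (p ^ 2))⁻¹) = 1 :=
          ZMod.coe_mul_inv_eq_one s hcop
        have hnat : (((s * V2 : ℕ) : ZMod (p ^ 2))) = 1 := by
          push_cast
          rw [hV2, ZMod.natCast_rightInverse _]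
          exact hunit2
        have hdvd : ((p : ℕ) : ℤ) ∣ ((s * V2 : ℕ) : ℤ) - 1 := by
          have h2 : (((p ^ 2 : ℕ)) : ℤ) ∣ ((s * V2 : ℕ) : ℤ) - 1 := by
            rw [← ZMod.intCast_zmod_eq_zero_iff_dvd]
            have h' := hnat
            push_cast at h' ⊢
            linear_combination h'
          exact dvd_trans (by exact_mod_cast dvd_pow_self (p : ℤ) two_ne_zero) h2
        have hmul1 : ((s : ZMod p)) * ((V2 : ℕ) : ZMod p) = 1 := by
          have : (((s * V2 : ℕ) : ℤ) : ZMod p) = 1 := by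
            have := (ZMod.intCast_zmod_eq_zero_iff_dvd (((s * V2 : ℕ) : ℤ) - 1) p).mpr hdvd
            push_cast at this ⊢
            linear_combination this
          push_cast at this
          exact this
        have hVeq : ((V2 : ℕ) : ZMod p) = ((V1 : ℕ) : ZMod p) := by
          have h1 : ((V1 : ℕ) : ZMod p) = (((s % p : ℕ) : ZMod p))⁻¹ := by
            rw [hV1, ZMod.natCast_rightInverse _]
          have h2 : (((s % p : ℕ) : ZMod p)) = (s : ZMod p) := ZMod.natCast_mod s p
          rw [h1, h2]
          exact eq_inv_of_mul_eq_one_right hmul1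
        push_cast
        rw [hVeq]
      -- combine
      show Complex.exp _ = f (s % p)
      rw [hf]
      simp only []
      calc Complex.exp (2 * ↑π * Complex.I *
            ((((p : ℤ) * a : ℤ) * (s : ℂ) + (((p : ℤ) * b : ℤ) : ℂ) * (V2 : ℂ)) / ((p ^ 2 : ℕ) : ℂ)))
          = Complex.exp (2 * ↑π * Complex.I *
            ((((a * (s : ℤ) + b * (V2 : ℤ) : ℤ)) : ℂ) / (p : ℂ))) := by rw [hred]
        _ = Complex.exp (2 * ↑π * Complex.I *
            ((((a * ((s % p : ℕ) : ℤ) + b * (V1 : ℤ) : ℤ)) : ℂ) / (p : ℂ))) :=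
              exp_congr p hp0 _ _ hmod
        _ = _ := by
              rw [← hV1]
              simp only [Int.cast_add, Int.cast_mul, Int.cast_natCast]
  rw [key, Finset.sum_product]
  simp only [Finset.sum_const, Finset.card_range, nsmul_eq_mul]
  rw [← Finset.mul_sum]
end
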